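/- arXiv:2604.27211 — 12 statements merged into one kernel-verified Lean document; each statement's English description precedes it below -/
import Mathlib

section
/- For any additive valuation v over goods M, any n, any subset S ⊆ M, and any good x ∈ S, it holds that TPS_n(v, S) ≤ TPS_{n-1}(v, S \ {x}). -/
open Finset

variable {α : Type*} [DecidableEq α]

/-- A highest-value good of `S` according to `v` (arbitrary if `S` is empty). -/
noncomputable def bestGood [Nonempty α] (v : α → ℝ) (S : Finset α) : α :=
  if h : S.Nonempty then (S.exists_max_image v h).choose else Classical.arbitrary α

/-- The truncated proportional share `TPS_n(v, S)`. -/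
noncomputable def TPS [Nonempty α] (v : α → ℝ) : ℕ → Finset α → ℝ
  | 0, S => ∑ x ∈ S, v x
  | 1, S => ∑ x ∈ S, v x
  | (n+2), S =>
      min ((∑ x ∈ S, v x) / ((n + 2 : ℕ) : ℝ)) (TPS v (n+1) (S.erase (bestGood v S)))

lemma bestGood_mem [Nonempty α] (v : α → ℝ) {S : Finset α} (h : S.Nonempty) :
    bestGood v S ∈ S := by
  rw [bestGood, dif_pos h]
  exact (S.exists_max_image v h).choose_spec.1

lemma bestGood_le [Nonempty α] (v : α → ℝ) {S : Finset α} (h : S.Nonempty) :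
    ∀ y ∈ S, v y ≤ v (bestGood v S) := by
  rw [bestGood, dif_pos h]
  exact (S.exists_max_image v h).choose_spec.2

lemma TPS_empty [Nonempty α] (v : α → ℝ) : ∀ k, TPS v k (∅ : Finset α) = 0
  | 0 => by simp [TPS]
  | 1 => by simp [TPS]
  | (k+2) => by simp [TPS, TPS_empty v (k+1)]

lemma lemA [Nonempty α] (v : α → ℝ) :
    ∀ (k : ℕ) (T : Finset α) (x y : α), x ∈ T → y ∈ T → v y ≤ v x →
      TPS v k (T.erase x) ≤ TPS v k (T.erase y)
  | 0, T, x, y, hx, hy, hvxy => by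
      simp only [TPS, Finset.sum_erase_eq_sub hx, Finset.sum_erase_eq_sub hy]
      linarith
  | 1, T, x, y, hx, hy, hvxy => by
      simp only [TPS, Finset.sum_erase_eq_sub hx, Finset.sum_erase_eq_sub hy]
      linarith
  | (k+2), T, x, y, hx, hy, hvxy => by
      by_cases hxy : x = y
      · subst hxy; exact le_refl _
      have hyx : y ∈ T.erase x := Finset.mem_erase.2 ⟨fun h => hxy h.symm, hy⟩
      have hxye : x ∈ T.erase y := Finset.mem_erase.2 ⟨hxy, hx⟩
      have hne1 : (T.erase x).Nonempty := ⟨y, hyx⟩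
      have hne2 : (T.erase y).Nonempty := ⟨x, hxye⟩
      set c := bestGood v (T.erase x) with hc
      set c' := bestGood v (T.erase y) with hc'
      have hcmem : c ∈ T.erase x := bestGood_mem v hne1
      have hc'mem : c' ∈ T.erase y := bestGood_mem v hne2
      have hcmax := bestGood_le v hne1
      have hc'max := bestGood_le v hne2
      simp only [TPS]
      refine le_min ?_ ?_
      · refine le_trans (min_le_left _ _) ?_
        have hsum : (∑ z ∈ T.erase x, v z) ≤ ∑ z ∈ T.erase y, v z := by
          rw [Finset.sum_erase_eq_sub hx, Finset.sum_erase_eq_sub hy]; linarith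
        have hpos : (0:ℝ) ≤ ((k + 2 : ℕ) : ℝ) := by positivity
        exact div_le_div_of_nonneg_right hsum hpos
      · refine le_trans (min_le_right _ _) ?_
        by_cases hcy : c = y
        · -- c = y, so v x is max of T.erase y
          have hxmax : ∀ t ∈ T.erase y, v t ≤ v x := by
            intro t ht
            rcases Finset.mem_erase.1 ht with ⟨hty, htT⟩
            by_cases htx : t = x
            · subst htx; exact le_refl _
            · have : t ∈ T.erase x := Finset.mem_erase.2 ⟨htx, htT⟩
              calc v t ≤ v c := hcmax t this
                _ = v y := by rw [hcy]
                _ ≤ v x := hvxy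
          have h1 : TPS v (k+1) ((T.erase y).erase x) ≤ TPS v (k+1) ((T.erase y).erase c') :=
            lemA v (k+1) (T.erase y) x c' hxye hc'mem (hxmax c' hc'mem)
          have heq : (T.erase x).erase c = (T.erase y).erase x := by
            rw [hcy, Finset.erase_right_comm]
          rw [heq]; exact h1
        · have hcTy : c ∈ T.erase y := by
            rcases Finset.mem_erase.1 hcmem with ⟨hcx, hcT⟩
            exact Finset.mem_erase.2 ⟨hcy, hcT⟩
          by_cases hc'x : c' = x
          · have h1 : TPS v (k+1) ((T.erase x).erase c) ≤ TPS v (k+1) ((T.erase x).erase y) :=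
              lemA v (k+1) (T.erase x) c y hcmem hyx (hcmax y hyx)
            have heq : (T.erase x).erase y = (T.erase y).erase c' := by
              rw [hc'x, Finset.erase_right_comm]
            rw [← heq]; exact h1
          · have hc'Tx : c' ∈ T.erase x := by
              rcases Finset.mem_erase.1 hc'mem with ⟨hc'y, hc'T⟩
              exact Finset.mem_erase.2 ⟨hc'x, hc'T⟩
            have h1 : TPS v (k+1) ((T.erase x).erase c) ≤ TPS v (k+1) ((T.erase x).erase c') :=
              lemA v (k+1) (T.erase x) c c' hcmem hc'Tx (hcmax c' hc'Tx)
            have hxc' : x ∈ T.erase c' := by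
              refine Finset.mem_erase.2 ⟨fun h => hc'x h.symm, hx⟩
            have hyc' : y ∈ T.erase c' := by
              rcases Finset.mem_erase.1 hc'mem with ⟨hc'y, _⟩
              exact Finset.mem_erase.2 ⟨fun h => hc'y h.symm, hy⟩
            have h2 : TPS v (k+1) ((T.erase c').erase x) ≤ TPS v (k+1) ((T.erase c').erase y) :=
              lemA v (k+1) (T.erase c') x y hxc' hyc' hvxy
            rw [Finset.erase_right_comm (a:=c') (b:=x) (s:=T), Finset.erase_right_comm (a:=c') (b:=y) (s:=T)] at h2
            exact h1.trans h2

lemma mainAux [Nonempty α] (v : α → ℝ) :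
    ∀ (n : ℕ) (S : Finset α) (x : α), x ∈ S →
      TPS v (n+2) S ≤ TPS v (n+1) (S.erase x)
  | 0, S, x, hx => by
      have hne : S.Nonempty := ⟨x, hx⟩
      have hb := bestGood_mem v hne
      have hbv := bestGood_le v hne x hx
      simp only [TPS]
      refine le_trans (min_le_right _ _) ?_
      show TPS v 1 _ ≤ TPS v 1 _
      simp only [TPS, Finset.sum_erase_eq_sub hb, Finset.sum_erase_eq_sub hx]
      linarith
  | (n+1), S, x, hx => by
      have hne : S.Nonempty := ⟨x, hx⟩
      set b := bestGood v S with hbdef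
      have hb : b ∈ S := bestGood_mem v hne
      have hbmax := bestGood_le v hne
      have h1 : TPS v (n+3) S ≤ TPS v (n+2) (S.erase b) := by
        simp only [TPS]; exact min_le_right _ _
      have goal2 : TPS v (n+2) (S.erase x) =
          min ((∑ z ∈ S.erase x, v z) / ((n + 2 : ℕ) : ℝ))
            (TPS v (n+1) ((S.erase x).erase (bestGood v (S.erase x)))) := by
        simp only [TPS]
      rw [goal2]
      refine le_min ?_ ?_
      · have h2 : TPS v (n+2) (S.erase b) ≤ (∑ z ∈ S.erase b, v z) / ((n + 2 : ℕ) : ℝ) := by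
          simp only [TPS]; exact min_le_left _ _
        have hsum : (∑ z ∈ S.erase b, v z) ≤ ∑ z ∈ S.erase x, v z := by
          rw [Finset.sum_erase_eq_sub hb, Finset.sum_erase_eq_sub hx]
          have := hbmax x hx; linarith
        have hpos : (0:ℝ) ≤ ((n + 2 : ℕ) : ℝ) := by positivity
        exact h1.trans (h2.trans (div_le_div_of_nonneg_right hsum hpos))
      · by_cases hSE : (S.erase x).Nonempty
        · set b' := bestGood v (S.erase x) with hb'def
          have hb' : b' ∈ S.erase x := bestGood_mem v hSE
          rcases Finset.mem_erase.1 hb' with ⟨hb'x, hb'S⟩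
          by_cases hxb : x = b
          · have hb'eb : b' ∈ S.erase b := hxb ▸ hb'
            have := mainAux v n (S.erase b) b' hb'eb
            rw [hxb]
            exact h1.trans this
          · by_cases hb'b : b' = b
            · have hxeb : x ∈ S.erase b := Finset.mem_erase.2 ⟨hxb, hx⟩
              have h2 := mainAux v n (S.erase b) x hxeb
              rw [Finset.erase_right_comm (a:=b) (b:=x) (s:=S)] at h2
              rw [hb'b]
              exact h1.trans h2
            · have hb'eb : b' ∈ S.erase b := Finset.mem_erase.2 ⟨hb'b, hb'S⟩
              have h2 := mainAux v n (S.erase b) b' hb'eb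
              have hbc' : b ∈ S.erase b' := Finset.mem_erase.2 ⟨fun h => hb'b h.symm, hb⟩
              have hxc' : x ∈ S.erase b' := Finset.mem_erase.2 ⟨fun h => hb'x h.symm, hx⟩
              have h3 := lemA v (n+1) (S.erase b') b x hbc' hxc' (hbmax x hx)
              rw [Finset.erase_right_comm (a:=b') (b:=b) (s:=S), Finset.erase_right_comm (a:=b') (b:=x) (s:=S)] at h3
              exact h1.trans (h2.trans h3)
        · rw [Finset.not_nonempty_iff_eq_empty] at hSE
          have hSx : S = {x} := by
            have := (Finset.erase_eq_empty_iff S x).1 hSE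
            rcases this with h | h
            · exact absurd hx (by simp [h])
            · exact h
          have hbx : b = x := by
            have := hb; rw [hSx] at this; simpa using this
          rw [hSE]
          have : S.erase b = ∅ := by rw [hbx, hSE]
          rw [this, TPS_empty] at h1
          simp [TPS_empty]
          exact h1

/-- TPS monotonicity: for any subset `S ⊆ M` and good `x ∈ S`,
`TPS_n(v, S) ≤ TPS_{n-1}(v, S \ {x})`. -/
theorem tps_mono [Nonempty α] (v : α → ℝ) (M S : Finset α) (x : α) (n : ℕ)
    (hv : ∀ a, 0 ≤ v a) (hS : S ⊆ M) (hx : x ∈ S) (hn : 2 ≤ n) :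
    TPS v n S ≤ TPS v (n - 1) (S.erase x) := by
  obtain ⟨m, rfl⟩ : ∃ m, n = m + 2 := ⟨n - 2, by omega⟩
  have : m + 2 - 1 = m + 1 := by omega
  rw [this]
  exact mainAux v m S x hx
end

section
/- Matrix completion: given a matrix B ∈ [0,1]^{r×c} and row targets s ∈ [0,c]^r such that (1) every row sum of B is at most its target s_u, (2) every column sum of B is at most 1, and (3) Σ_u s_u = c, there exists a matrix B' ∈ [0,1]^{r×c} with B'_{uv} ≥ B_{uv} for all u,v, every row sum of B' exactly equal to s_u, and every column sum of B' exactly equal to 1. -/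
open Finset

/-- Matrix completion: a matrix `B ∈ [0,1]^{r×c}` whose row sums are at most the
row targets `s ∈ [0,c]^r` and whose column sums are at most `1`, with `Σ_u s_u = c`,
can be completed (entrywise increased, staying in `[0,1]`) so that every row sum
equals its target exactly and every column sum equals `1` exactly. -/
theorem matrix_completion (r c : ℕ) (B : Fin r → Fin c → ℝ) (s : Fin r → ℝ)
    (hB0 : ∀ u v, 0 ≤ B u v) (hB1 : ∀ u v, B u v ≤ 1)
    (hs0 : ∀ u, 0 ≤ s u) (hs1 : ∀ u, s u ≤ (c : ℝ))
    (hrow : ∀ u, ∑ v, B u v ≤ s u)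
    (hcol : ∀ v, ∑ u, B u v ≤ 1)
    (htot : ∑ u, s u = (c : ℝ)) :
    ∃ B' : Fin r → Fin c → ℝ,
      (∀ u v, 0 ≤ B' u v) ∧ (∀ u v, B' u v ≤ 1) ∧
      (∀ u v, B u v ≤ B' u v) ∧
      (∀ u, ∑ v, B' u v = s u) ∧
      (∀ v, ∑ u, B' u v = 1) := by
  set ρ : Fin r → ℝ := fun u => ∑ v, B u v with hρ
  set γ : Fin c → ℝ := fun v => ∑ u, B u v with hγ
  set D : ℝ := (c : ℝ) - ∑ u, ρ u with hD
  have hDr : ∑ u, (s u - ρ u) = D := by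
    rw [Finset.sum_sub_distrib, htot, hD]
  have hDc : ∑ v, (1 - γ v) = D := by
    rw [Finset.sum_sub_distrib, Finset.sum_const, Finset.card_univ, Fintype.card_fin,
      nsmul_eq_mul, mul_one, hD, hγ, hρ]
    rw [Finset.sum_comm]
  have hrd : ∀ u, 0 ≤ s u - ρ u := fun u => sub_nonneg.2 (hrow u)
  have hcd : ∀ v, 0 ≤ 1 - γ v := fun v => sub_nonneg.2 (hcol v)
  have hDnn : 0 ≤ D := hDr ▸ Finset.sum_nonneg fun u _ => hrd u
  rcases eq_or_lt_of_le hDnn with h0 | hpos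
  · -- no deficit: B itself works
    refine ⟨B, hB0, hB1, fun u v => le_refl _, ?_, ?_⟩
    · intro u
      have := (Finset.sum_eq_zero_iff_of_nonneg (fun u _ => hrd u)).1
        (by rw [hDr, ← h0]) u (Finset.mem_univ u)
      linarith
    · intro v
      have := (Finset.sum_eq_zero_iff_of_nonneg (fun v _ => hcd v)).1
        (by rw [hDc, ← h0]) v (Finset.mem_univ v)
      linarith
  · have hDne : D ≠ 0 := ne_of_gt hpos
    refine ⟨fun u v => B u v + (s u - ρ u) * ((1 - γ v) / D), ?_, ?_, ?_, ?_, ?_⟩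
    · intro u v
      have : 0 ≤ (s u - ρ u) * ((1 - γ v) / D) :=
        mul_nonneg (hrd u) (div_nonneg (hcd v) hDnn)
      linarith [hB0 u v]
    · intro u v
      have h1 : s u - ρ u ≤ D := by
        rw [← hDr]
        exact Finset.single_le_sum (fun u _ => hrd u) (Finset.mem_univ u)
      have h2 : 1 - γ v ≤ 1 - B u v := by
        have : B u v ≤ γ v :=
          Finset.single_le_sum (fun u' _ => hB0 u' v) (Finset.mem_univ u)
        linarith
      have h3 : (s u - ρ u) * ((1 - γ v) / D) ≤ D * ((1 - B u v) / D) := by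
        apply mul_le_mul h1 _ (div_nonneg (hcd v) hDnn) hDnn
        exact div_le_div_of_nonneg_right h2 hDnn
      have h4 : D * ((1 - B u v) / D) = 1 - B u v := by
        field_simp
      linarith
    · intro u v
      have : 0 ≤ (s u - ρ u) * ((1 - γ v) / D) :=
        mul_nonneg (hrd u) (div_nonneg (hcd v) hDnn)
      linarith
    · intro u
      rw [Finset.sum_add_distrib]
      have : ∑ v, (s u - ρ u) * ((1 - γ v) / D) = (s u - ρ u) * (D / D) := by
        rw [← Finset.mul_sum, ← Finset.sum_div, hDc]
      rw [this, div_self hDne, mul_one]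
      simp [hρ]
    · intro v
      rw [Finset.sum_add_distrib]
      have : ∑ u, (s u - ρ u) * ((1 - γ v) / D) = D * ((1 - γ v) / D) := by
        rw [← Finset.sum_mul, hDr]
      rw [this]
      have h4 : D * ((1 - γ v) / D) = 1 - γ v := by field_simp
      rw [h4]
      simp [hγ]
end

section
/- Subsequence picking: let ω_1,…,ω_n be an ordering of n agents each with a strict (injective) preference order over a finite set of goods, and let A = {a_1,…,a_n} be the set of goods chosen when agents pick in turn, each taking her most preferred remaining good. Then for any subsequence ω_{i_1},…,ω_{i_k} (with i_1 < … < i_k), the set B of goods chosen when only these agents pick in turn (in this order) satisfies B ⊆ A. -/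
open Finset

variable {α : Type*} [DecidableEq α] [Nonempty α]

/-- The most preferred good of `R` according to the (rank) function `f`
(smaller rank means more preferred); arbitrary if `R` is empty. -/
noncomputable def fav (f : α → ℕ) (R : Finset α) : α :=
  if h : R.Nonempty then (R.exists_min_image f h).choose else Classical.arbitrary α

/-- The sequence of goods picked when the agents in the list pick in turn, each
taking her single most preferred remaining good. `pref a` is the rank function of
agent `a` (smaller is better). -/
noncomputable def pickSeq {ι : Type*} (pref : ι → α → ℕ) : List ι → Finset α → List α
  | [], _ => []
  | a :: rest, R =>
    if R.Nonempty then
      fav (pref a) R :: pickSeq pref rest (R.erase (fav (pref a) R))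
    else []

lemma fav_spec (f : α → ℕ) {R : Finset α} (h : R.Nonempty) :
    fav f R ∈ R ∧ ∀ y ∈ R, f (fav f R) ≤ f y := by
  rw [fav, dif_pos h]
  exact (R.exists_min_image f h).choose_spec

lemma fav_eq {f : α → ℕ} (hf : Function.Injective f) {R : Finset α} {x : α}
    (hx : x ∈ R) (hmin : ∀ y ∈ R, f x ≤ f y) : fav f R = x := by
  obtain ⟨hm, hle⟩ := fav_spec f ⟨x, hx⟩
  exact hf (le_antisymm (hle x hx) (hmin _ hm))

lemma pickSeq_empty {ι : Type*} (pref : ι → α → ℕ) (L : List ι) :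
    pickSeq pref L (∅ : Finset α) = [] := by
  cases L <;> simp [pickSeq]

lemma pickSeq_erase {ι : Type*} (pref : ι → α → ℕ)
    (hinj : ∀ i, Function.Injective (pref i)) :
    ∀ (L : List ι) (x : α) (R : Finset α), ∀ z ∈ pickSeq pref L R,
      z = x ∨ z ∈ pickSeq pref L (R.erase x) := by
  intro L
  induction L with
  | nil => simp [pickSeq]
  | cons a rest ih =>
    intro x R z hz
    by_cases hR : R.Nonempty
    · rw [pickSeq, if_pos hR] at hz
      set y := fav (pref a) R with hy
      obtain ⟨hymem, hymin⟩ := fav_spec (pref a) hR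
      by_cases hyx : y = x
      · rcases List.mem_cons.mp hz with h | h
        · exact Or.inl (h.trans hyx)
        · rw [hyx] at h
          by_cases hS : (R.erase x).Nonempty
          · right
            rw [pickSeq, if_pos hS]
            rcases ih (fav (pref a) (R.erase x)) (R.erase x) z h with h' | h'
            · exact h' ▸ List.mem_cons_self
            · exact List.mem_cons_of_mem _ h'
          · rw [not_nonempty_iff_eq_empty] at hS
            rw [hS, pickSeq_empty] at h
            simp at h
      · have hyR : y ∈ R.erase x := Finset.mem_erase.mpr ⟨hyx, hymem⟩
        have hfy : fav (pref a) (R.erase x) = y :=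
          fav_eq (hinj a) hyR (fun w hw => hymin w (Finset.mem_of_mem_erase hw))
        rcases List.mem_cons.mp hz with h | h
        · right
          rw [pickSeq, if_pos ⟨y, hyR⟩, hfy]
          exact h ▸ List.mem_cons_self
        · rcases ih x (R.erase y) z h with h' | h'
          · exact Or.inl h'
          · right
            have hcomm : (R.erase x).erase y = (R.erase y).erase x := by
              ext w; simp only [Finset.mem_erase]; tauto
            rw [pickSeq, if_pos ⟨y, hyR⟩, hfy, hcomm]
            exact List.mem_cons_of_mem _ h'
    · rw [pickSeq, if_neg hR] at hz
      simp at hz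


/-- Subsequence picking: the set of goods picked by any subsequence `L'` of the
agent ordering `L` is contained in the set of goods picked by the full ordering. -/
theorem subsequence_picking {ι : Type*} (pref : ι → α → ℕ) (L L' : List ι)
    (M : Finset α) (hinj : ∀ i, Function.Injective (pref i))
    (hsub : L'.Sublist L) (hcard : L.length ≤ M.card) :
    (pickSeq pref L' M).toFinset ⊆ (pickSeq pref L M).toFinset := by
  clear hcard
  induction hsub generalizing M with
  | slnil => simp
  | cons a h ih =>
    intro z hz
    have hz' := List.mem_toFinset.mp (ih M hz)
    by_cases hM : M.Nonempty
    · rw [List.mem_toFinset, pickSeq, if_pos hM]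
      rcases pickSeq_erase pref hinj _ (fav (pref a) M) M z hz' with h' | h'
      · exact h' ▸ List.mem_cons_self
      · exact List.mem_cons_of_mem _ h'
    · rw [not_nonempty_iff_eq_empty] at hM
      rw [hM, pickSeq_empty] at hz'
      simp at hz'
  | cons_cons a h ih =>
    intro z hz
    by_cases hM : M.Nonempty
    · rw [List.mem_toFinset, pickSeq, if_pos hM] at hz ⊢
      rcases List.mem_cons.mp hz with h' | h'
      · exact h' ▸ List.mem_cons_self
      · exact List.mem_cons_of_mem _
          (List.mem_toFinset.mp (ih _ (List.mem_toFinset.mpr h')))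
    · rw [not_nonempty_iff_eq_empty] at hM
      rw [List.mem_toFinset, hM, pickSeq_empty] at hz
      simp at hz
end

section
/- Stronger subsequence picking invariant: with notation as in the subsequence picking claim, for each j from 1 to k, the first j goods picked in the subsequence process satisfy {b_1,…,b_j} ⊆ {a_1,…,a_{i_j}}, where a_1,…,a_n are the goods picked in the full ordering (in order) and b_1,…,b_k are the goods picked in the subsequence (in order). -/
open Finset

variable {α : Type*} [DecidableEq α] [Nonempty α]

lemma fav_mem (f : α → ℕ) {R : Finset α} (h : R.Nonempty) : fav f R ∈ R := by
  rw [fav, dif_pos h]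
  exact (R.exists_min_image f h).choose_spec.1

lemma fav_min (f : α → ℕ) {R : Finset α} (h : R.Nonempty) {x : α} (hx : x ∈ R) :
    f (fav f R) ≤ f x := by
  rw [fav, dif_pos h]
  exact (R.exists_min_image f h).choose_spec.2 x hx

lemma pickSeq_length {ι : Type*} (pref : ι → α → ℕ) :
    ∀ (l : List ι) (R : Finset α), l.length ≤ R.card →
      (pickSeq pref l R).length = l.length
  | [], R, _ => rfl
  | a :: rest, R, h => by
    have hR : R.Nonempty := card_pos.mp (lt_of_lt_of_le (Nat.succ_pos _) h)
    have h' : rest.length ≤ (R.erase (fav (pref a) R)).card := by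
      rw [card_erase_of_mem (fav_mem _ hR)]
      simp only [List.length_cons] at h; omega
    rw [pickSeq, if_pos hR]
    simp [pickSeq_length pref rest _ h']

lemma take_toFinset_mono {l : List α} {i m : ℕ} (h : i ≤ m) :
    (l.take i).toFinset ⊆ (l.take m).toFinset := by
  intro x hx
  rw [List.mem_toFinset] at hx ⊢
  have : l.take i = (l.take m).take i := by rw [List.take_take, Nat.min_eq_left h]
  rw [this] at hx
  exact List.take_subset _ _ hx

lemma pickSeq_getElem? {ι : Type*} (pref : ι → α → ℕ) :
    ∀ (l : List ι) (R : Finset α) (i : ℕ) (hi : i < l.length), l.length ≤ R.card →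
      (pickSeq pref l R)[i]? =
        some (fav (pref (l[i]'hi)) (R \ ((pickSeq pref l R).take i).toFinset))
  | a :: rest, R, 0, hi, h => by
    have hR : R.Nonempty := card_pos.mp (lt_of_lt_of_le (Nat.succ_pos _) h)
    rw [pickSeq, if_pos hR]
    simp
  | a :: rest, R, i + 1, hi, h => by
    have hR : R.Nonempty := card_pos.mp (lt_of_lt_of_le (Nat.succ_pos _) h)
    have hmem := fav_mem (pref a) hR
    have h' : rest.length ≤ (R.erase (fav (pref a) R)).card := by
      rw [card_erase_of_mem hmem]
      simp only [List.length_cons] at h; omega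
    have hi' : i < rest.length := by simpa using Nat.lt_of_succ_lt_succ hi
    have IH := pickSeq_getElem? pref rest (R.erase (fav (pref a) R)) i hi' h'
    rw [pickSeq, if_pos hR]
    simp only [List.getElem?_cons_succ, IH, List.take_succ_cons, List.toFinset_cons,
      List.getElem_cons_succ, Option.some.injEq]
    have hset : R.erase (fav (pref a) R) \
          (List.take i (pickSeq pref rest (R.erase (fav (pref a) R)))).toFinset
        = R \ insert (fav (pref a) R)
            (List.take i (pickSeq pref rest (R.erase (fav (pref a) R)))).toFinset := by
      ext x
      simp only [mem_sdiff, mem_erase, mem_insert, not_or]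
      tauto
    rw [hset]

/-- Key step: if the goods picked so far in process 2 are among those picked so far in
process 1, and the next agent is the same, then the inclusion extends one more step. -/
lemma pick_step {ι : Type*} (pref : ι → α → ℕ) (hinj : ∀ i, Function.Injective (pref i))
    (M : Finset α) (l₁ l₂ : List ι) {i j : ℕ} (hi : i < l₁.length) (hj : j < l₂.length)
    (h₁ : l₁.length ≤ M.card) (h₂ : l₂.length ≤ M.card)
    (hag : l₁[i]'hi = l₂[j]'hj)
    (hsub : ((pickSeq pref l₂ M).take j).toFinset ⊆ ((pickSeq pref l₁ M).take i).toFinset) :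
    ((pickSeq pref l₂ M).take (j + 1)).toFinset ⊆
      ((pickSeq pref l₁ M).take (i + 1)).toFinset := by
  set A := pickSeq pref l₁ M with hA
  set B := pickSeq pref l₂ M with hB
  set S := (A.take i).toFinset with hS
  set T := (B.take j).toFinset with hT
  set g := pref (l₁[i]'hi) with hg
  have hSne : (M \ S).Nonempty := by
    rw [Finset.sdiff_nonempty]
    intro hMS
    have hc0 : M.card ≤ S.card := card_le_card hMS
    have hc1 : S.card ≤ i :=
      le_trans (List.toFinset_card_le _) (by rw [List.length_take]; omega)
    have hiM : i < M.card := lt_of_lt_of_le hi h₁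
    omega
  have hTS : M \ S ⊆ M \ T := sdiff_subset_sdiff (le_refl _) hsub
  have hTne : (M \ T).Nonempty := hSne.mono hTS
  have hAi : A[i]? = some (fav g (M \ S)) := pickSeq_getElem? pref l₁ M i hi h₁
  have hBj : B[j]? = some (fav (pref (l₂[j]'hj)) (M \ T)) := pickSeq_getElem? pref l₂ M j hj h₂
  rw [← hag] at hBj
  set a := fav g (M \ S) with ha
  set b := fav g (M \ T) with hb
  have haS : (A.take (i+1)).toFinset = insert a S := by
    rw [List.take_succ, hAi]
    ext x; simp [hS]
  have hbT : (B.take (j+1)).toFinset = insert b T := by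
    rw [List.take_succ, hBj]
    ext x; simp [hT]
  rw [haS, hbT]
  have hsub' : T ⊆ insert a S := hsub.trans (subset_insert _ _)
  intro x hx
  rw [mem_insert] at hx
  rcases hx with rfl | hx
  · -- x = b
    by_cases hbS : b ∈ S
    · exact mem_insert_of_mem hbS
    · have hbM : b ∈ M := (mem_sdiff.mp (fav_mem g hTne)).1
      have hbMS : b ∈ M \ S := mem_sdiff.mpr ⟨hbM, hbS⟩
      have hab : a = b := by
        have h1 : g a ≤ g b := fav_min g hSne hbMS
        have h2 : g b ≤ g a := fav_min g hTne (hTS (fav_mem g hSne))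
        exact hinj _ (le_antisymm h1 h2)
      rw [← hab]; exact mem_insert_self _ _
  · exact hsub' hx

/-- Stronger subsequence-picking invariant: if `b_1,…,b_k` are the goods picked by
the subsequence `ω_{φ 0}, …, ω_{φ (k-1)}` (with `φ` strictly monotone) and
`a_1,…,a_n` the goods picked by the full ordering `ω`, then for each `j`,
`{b_1,…,b_{j+1}} ⊆ {a_1,…,a_{φ(j)+1}}`. -/
theorem subsequence_picking_invariant {ι : Type*} (pref : ι → α → ℕ)
    {n k : ℕ} (ω : Fin n → ι) (φ : Fin k → Fin n) (hφ : StrictMono φ)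
    (M : Finset α) (hinj : ∀ i, Function.Injective (pref i)) (hcard : n ≤ M.card) :
    ∀ j : Fin k,
      ((pickSeq pref (List.ofFn (ω ∘ φ)) M).take ((j : ℕ) + 1)).toFinset ⊆
        ((pickSeq pref (List.ofFn ω) M).take (((φ j : Fin n) : ℕ) + 1)).toFinset := by
  have hkn : k ≤ n := by
    have := Fintype.card_le_of_injective φ hφ.injective
    simpa using this
  have h₁ : (List.ofFn ω).length ≤ M.card := by simpa using hcard
  have h₂ : (List.ofFn (ω ∘ φ)).length ≤ M.card := by simpa using le_trans hkn hcard
  have key : ∀ (jn : ℕ) (hjn : jn < k),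
      ((pickSeq pref (List.ofFn (ω ∘ φ)) M).take (jn + 1)).toFinset ⊆
        ((pickSeq pref (List.ofFn ω) M).take ((φ ⟨jn, hjn⟩ : ℕ) + 1)).toFinset := by
    intro jn
    induction jn with
    | zero =>
      intro hjn
      apply pick_step pref hinj M (List.ofFn ω) (List.ofFn (ω ∘ φ))
        (i := (φ ⟨0, hjn⟩ : ℕ)) (j := 0)
        (by simpa using (φ ⟨0, hjn⟩).isLt) (by simpa using hjn) h₁ h₂
      · simp
      · simp
    | succ jn IH =>
      intro hjn
      have hjn' : jn < k := Nat.lt_of_succ_lt hjn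
      have hmono : (φ ⟨jn, hjn'⟩ : ℕ) + 1 ≤ (φ ⟨jn + 1, hjn⟩ : ℕ) := by
        have : φ ⟨jn, hjn'⟩ < φ ⟨jn + 1, hjn⟩ := hφ (by simp [Fin.lt_def])
        exact this
      have hsub : ((pickSeq pref (List.ofFn (ω ∘ φ)) M).take (jn + 1)).toFinset ⊆
          ((pickSeq pref (List.ofFn ω) M).take ((φ ⟨jn + 1, hjn⟩ : ℕ))).toFinset :=
        (IH hjn').trans (take_toFinset_mono hmono)
      apply pick_step pref hinj M (List.ofFn ω) (List.ofFn (ω ∘ φ))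
        (i := (φ ⟨jn + 1, hjn⟩ : ℕ)) (j := jn + 1)
        (by simpa using (φ ⟨jn + 1, hjn⟩).isLt) (by simpa using hjn) h₁ h₂
      · simp
      · exact hsub
  intro j
  have := key (j : ℕ) j.isLt
  simpa [Fin.eta] using this
end

section
/- Sorted ordering has weight at most 1: let d_1 ≤ d_2 ≤ … ≤ d_n be nonnegative integer deficiencies, each at most n, sorted in non-decreasing order, and let π be the identity ordering (agent i at position i). Define w_i(π) = 1/d_i if i > n − d_i and 0 otherwise (0 if d_i = 0). Then Σ_{i=1}^n w_i(π) ≤ 1. -/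
open Finset

/-- The sorted (non-decreasing deficiency) ordering has total weight at most 1:
agent `i` (0-indexed) sits at position `i+1`, contributes `1/dᵢ` when her position
exceeds `n − dᵢ` (and `dᵢ ≠ 0`), and the total contribution is at most `1`. -/
theorem sorted_ordering_weight_le_one (n : ℕ) (d : Fin n → ℕ)
    (hmono : Monotone d) (hle : ∀ i, d i ≤ n) :
    ∑ i : Fin n,
        (if d i ≠ 0 ∧ n - d i < (i : ℕ) + 1 then (1 : ℝ) / (d i : ℝ) else 0) ≤ 1 := by
  classical
  have hsum : ∑ i : Fin n,
      (if d i ≠ 0 ∧ n - d i < (i : ℕ) + 1 then (1 : ℝ) / (d i : ℝ) else 0)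
      = ∑ i ∈ Finset.univ.filter (fun i : Fin n => d i ≠ 0 ∧ n - d i < (i : ℕ) + 1),
          (1 : ℝ) / (d i : ℝ) := (Finset.sum_filter _ _).symm
  rw [hsum]
  set T := Finset.univ.filter (fun i : Fin n => d i ≠ 0 ∧ n - d i < (i : ℕ) + 1) with hT
  rcases T.eq_empty_or_nonempty with h | h
  · simp [h]
  · set i0 := T.min' h with hi0
    have hi0T : i0 ∈ T := T.min'_mem h
    obtain ⟨hd0, hlt⟩ := Finset.mem_filter.mp hi0T |>.2
    have hkey : n - (i0 : ℕ) ≤ d i0 := by omega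
    have hpos : 0 < n - (i0 : ℕ) := by
      have := i0.isLt; omega
    have hbound : ∀ i ∈ T, (1 : ℝ) / (d i : ℝ) ≤ 1 / ((n - (i0 : ℕ) : ℕ) : ℝ) := by
      intro i hi
      have hle' : i0 ≤ i := T.min'_le i hi
      have hdi : (n - (i0 : ℕ)) ≤ d i := le_trans hkey (hmono hle')
      apply one_div_le_one_div_of_le
      · exact_mod_cast hpos
      · exact_mod_cast hdi
    calc ∑ i ∈ T, (1 : ℝ) / (d i : ℝ)
        ≤ ∑ _i ∈ T, (1 : ℝ) / ((n - (i0 : ℕ) : ℕ) : ℝ) := Finset.sum_le_sum hbound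
      _ = (T.card : ℝ) * (1 / ((n - (i0 : ℕ) : ℕ) : ℝ)) := by
          rw [Finset.sum_const, nsmul_eq_mul]
      _ ≤ ((n - (i0 : ℕ) : ℕ) : ℝ) * (1 / ((n - (i0 : ℕ) : ℕ) : ℝ)) := by
          apply mul_le_mul_of_nonneg_right
          · have hsub : T ⊆ Finset.Ici i0 := fun i hi =>
              Finset.mem_Ici.mpr (T.min'_le i hi)
            have hcard : T.card ≤ n - (i0 : ℕ) := by
              calc T.card ≤ (Finset.Ici i0).card := Finset.card_le_card hsub
                _ = n - (i0 : ℕ) := Fin.card_Ici i0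
            exact_mod_cast hcard
          · positivity
      _ = 1 := by
          rw [mul_one_div, div_self]
          exact_mod_cast hpos.ne'
end

section
/- Cyclic shifts of the sorted ordering have weight at most 2: with deficiencies d_1 ≤ … ≤ d_n as above, for any cyclic shift π^{(j)} which orders agents as j, j+1, …, n, 1, …, j−1, the total demand Σ_{i=1}^n w_i(π^{(j)}) is at most 2, where w_i(π^{(j)}) = 1/d_i if the position of agent i in π^{(j)} exceeds n − d_i, and 0 otherwise (0 if d_i = 0). -/
open Finset

/-- Sub-claim: a contiguous block of agents at consecutive positions `p+k+1` (1-indexed),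
with non-decreasing deficiencies along the block, has total demand at most `1`. -/
lemma block_sum_le_one (n m p : ℕ) (e : ℕ → ℕ)
    (hmono : ∀ a b, a ≤ b → b < m → e a ≤ e b) (hpm : p + m ≤ n) :
    ∑ k ∈ Finset.range m,
        (if e k ≠ 0 ∧ n - e k < p + k + 1 then (1 : ℝ) / (e k : ℝ) else 0) ≤ 1 := by
  classical
  rw [← Finset.sum_filter]
  set W := (Finset.range m).filter (fun k => e k ≠ 0 ∧ n - e k < p + k + 1) with hW
  rcases W.eq_empty_or_nonempty with h | h
  · simp [h]
  · set k0 := W.min' h with hk0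
    have hk0W : k0 ∈ W := W.min'_mem h
    have hk0m : k0 < m := Finset.mem_range.1 (Finset.mem_filter.1 hk0W).1
    have hWsub : W ⊆ Finset.Ico k0 m := by
      intro k hk
      exact Finset.mem_Ico.2 ⟨Finset.min'_le _ _ hk, Finset.mem_range.1 (Finset.mem_filter.1 hk).1⟩
    have htle : W.card ≤ m - k0 := by
      simpa using Finset.card_le_card hWsub
    have hcond : e k0 ≠ 0 ∧ n - e k0 < p + k0 + 1 := (Finset.mem_filter.1 hk0W).2
    have he0 : m - k0 ≤ e k0 := by omega
    have hkey : ∀ k ∈ W, (W.card : ℝ) ≤ (e k : ℝ) := by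
      intro k hk
      have h1 : e k0 ≤ e k :=
        hmono k0 k (Finset.min'_le _ _ hk) (Finset.mem_range.1 (Finset.mem_filter.1 hk).1)
      exact_mod_cast (htle.trans (he0.trans h1))
    have hpos : 0 < W.card := Finset.card_pos.2 h
    have hsum : ∑ k ∈ W, (1 : ℝ) / (e k : ℝ) ≤ W.card • ((1 : ℝ) / W.card) := by
      apply Finset.sum_le_card_nsmul
      intro k hk
      exact one_div_le_one_div_of_le (by exact_mod_cast hpos) (hkey k hk)
    calc ∑ k ∈ W, (1 : ℝ) / (e k : ℝ) ≤ W.card • ((1 : ℝ) / W.card) := hsum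
      _ = 1 := by
          rw [nsmul_eq_mul]
          field_simp

lemma sub_val_ge (n : ℕ) [NeZero n] (i j : Fin n) (h : j ≤ i) :
    ((i - j : Fin n) : ℕ) = i.val - j.val := by
  rw [Fin.sub_def]
  have hj := j.isLt; have hi := i.isLt
  have h' : (j : ℕ) ≤ i := h
  have h1 : n - j.val + i.val = n + (i.val - j.val) := by omega
  simp only [h1, Nat.add_mod_left, Nat.mod_eq_of_lt (show i.val - j.val < n by omega)]

lemma sub_val_lt (n : ℕ) [NeZero n] (i j : Fin n) (h : i < j) :
    ((i - j : Fin n) : ℕ) = i.val + (n - j.val) := by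
  rw [Fin.sub_def]
  have hj := j.isLt; have hi := i.isLt
  have h' : (i : ℕ) < j := h
  simp only [Nat.mod_eq_of_lt (show n - j.val + i.val < n by omega)]
  omega

/-- Cyclic shifts of the sorted ordering have weight at most 2: with deficiencies
`d₀ ≤ … ≤ d_{n-1}`, in the cyclic shift starting at `j` agent `i` has 1-indexed
position `((i − j : Fin n) : ℕ) + 1`, and the total demand is at most `2`. -/
theorem cyclic_sorted_ordering_weight_le_two (n : ℕ) [NeZero n] (d : Fin n → ℕ)
    (hmono : Monotone d) (hle : ∀ i, d i ≤ n) (j : Fin n) :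
    ∑ i : Fin n,
        (if d i ≠ 0 ∧ n - d i < ((i - j : Fin n) : ℕ) + 1 then (1 : ℝ) / (d i : ℝ) else 0)
      ≤ 2 := by
  classical
  have hn : 0 < n := Nat.pos_of_ne_zero (NeZero.ne n)
  set f : Fin n → ℝ := fun i =>
    if d i ≠ 0 ∧ n - d i < ((i - j : Fin n) : ℕ) + 1 then (1 : ℝ) / (d i : ℝ) else 0 with hf
  rw [← Finset.sum_filter_add_sum_filter_not Finset.univ (fun i => j ≤ i) f]
  have hA : ∑ i ∈ Finset.univ.filter (fun i => j ≤ i), f i ≤ 1 := by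
    set eA : ℕ → ℕ := fun t => if h : j.val + t < n then d ⟨j.val + t, h⟩ else 0 with heA
    have hmonoA : ∀ a b, a ≤ b → b < n - j.val → eA a ≤ eA b := by
      intro a b hab hb
      have hja : j.val + a < n := by omega
      have hjb : j.val + b < n := by omega
      simp only [heA, dif_pos hja, dif_pos hjb]
      exact hmono (by simp [Fin.mk_le_mk]; omega)
    have hblock := block_sum_le_one n (n - j.val) 0 eA hmonoA (by omega)
    refine le_trans (le_of_eq ?_) hblock
    refine Finset.sum_nbij' (i := fun a => a.val - j.val)
      (j := fun t => ⟨(j.val + t) % n, Nat.mod_lt _ hn⟩) ?_ ?_ ?_ ?_ ?_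
    · intro a ha
      have hja : j ≤ a := (Finset.mem_filter.1 ha).2
      have : (j : ℕ) ≤ a := hja
      have := a.isLt
      exact Finset.mem_range.2 (show a.val - j.val < n - j.val by omega)
    · intro t ht
      have ht' : t < n - j.val := Finset.mem_range.1 ht
      simp only [Finset.mem_filter, Finset.mem_univ, true_and]
      show (j : ℕ) ≤ (j.val + t) % n
      rw [Nat.mod_eq_of_lt (by omega)]; omega
    · intro a ha
      have hja : (j : ℕ) ≤ a := (Finset.mem_filter.1 ha).2
      ext
      simp only
      rw [Nat.mod_eq_of_lt (by have := a.isLt; omega)]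
      omega
    · intro t ht
      have ht' : t < n - j.val := Finset.mem_range.1 ht
      simp only
      rw [Nat.mod_eq_of_lt (by omega)]
      omega
    · intro a ha
      have hja : j ≤ a := (Finset.mem_filter.1 ha).2
      have hja' : (j : ℕ) ≤ a := hja
      have hlt : j.val + (a.val - j.val) < n := by have := a.isLt; omega
      have h1 : eA (a.val - j.val) = d a := by
        simp only [heA, dif_pos hlt]
        congr 1
        ext; simp; omega
      have h2 : ((a - j : Fin n) : ℕ) = a.val - j.val := sub_val_ge n a j hja
      show (if d a ≠ 0 ∧ n - d a < ((a - j : Fin n) : ℕ) + 1 then (1 : ℝ) / (d a : ℝ) else 0)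
        = (if eA (a.val - j.val) ≠ 0 ∧ n - eA (a.val - j.val) < 0 + (a.val - j.val) + 1
            then (1 : ℝ) / (eA (a.val - j.val) : ℝ) else 0)
      rw [h1, h2]
      simp
  have hB : ∑ i ∈ Finset.univ.filter (fun i => ¬ j ≤ i), f i ≤ 1 := by
    set eB : ℕ → ℕ := fun k => if h : k < n then d ⟨k, h⟩ else 0 with heB
    have hmonoB : ∀ a b, a ≤ b → b < j.val → eB a ≤ eB b := by
      intro a b hab hb
      have hja := j.isLt
      have ha : a < n := by omega
      have hbn : b < n := by omega
      simp only [heB, dif_pos ha, dif_pos hbn]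
      exact hmono (by simp [Fin.mk_le_mk]; omega)
    have hblock := block_sum_le_one n j.val (n - j.val) eB hmonoB (by have := j.isLt; omega)
    refine le_trans (le_of_eq ?_) hblock
    refine Finset.sum_nbij' (i := fun a => a.val)
      (j := fun k => ⟨k % n, Nat.mod_lt _ hn⟩) ?_ ?_ ?_ ?_ ?_
    · intro a ha
      have hja : ¬ j ≤ a := (Finset.mem_filter.1 ha).2
      have : (a : ℕ) < j := by
        rcases lt_or_ge a j with h | h
        · exact h
        · exact absurd h hja
      exact Finset.mem_range.2 this
    · intro k hk
      have hk' : k < j.val := Finset.mem_range.1 hk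
      have hja := j.isLt
      simp only [Finset.mem_filter, Finset.mem_univ, true_and]
      intro hcon
      have : (j : ℕ) ≤ k % n := hcon
      rw [Nat.mod_eq_of_lt (by omega)] at this
      omega
    · intro a ha
      ext; simp [Nat.mod_eq_of_lt a.isLt]
    · intro k hk
      have hk' : k < j.val := Finset.mem_range.1 hk
      have hja := j.isLt
      simp only
      exact Nat.mod_eq_of_lt (by omega)
    · intro a ha
      have hja : ¬ j ≤ a := (Finset.mem_filter.1 ha).2
      have halt : (a : ℕ) < j := by
        rcases lt_or_ge a j with h | h
        · exact h
        · exact absurd h hja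
      have h1 : eB a.val = d a := by
        simp only [heB, dif_pos a.isLt]
      have h2 : ((a - j : Fin n) : ℕ) = a.val + (n - j.val) :=
        sub_val_lt n a j (by exact halt)
      show (if d a ≠ 0 ∧ n - d a < ((a - j : Fin n) : ℕ) + 1 then (1 : ℝ) / (d a : ℝ) else 0)
        = (if eB a.val ≠ 0 ∧ n - eB a.val < (n - j.val) + a.val + 1
            then (1 : ℝ) / (eB a.val : ℝ) else 0)
      rw [h1, h2]
      exact if_congr (and_congr_right fun _ => by omega) rfl rfl
  linarith
end

section
/- Contiguous block demand bound: suppose agents a_l,…,a_r have non-decreasing deficiencies d_l ≤ … ≤ d_r (nonnegative integers ≤ n) and occupy consecutive positions p, p+1, …, p + (r−l) in an ordering of n positions. Each agent a_i contributes 1/d_i if her position exceeds n − d_i and 0 otherwise. Then the total contribution of the block is at most 1. -/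
open Finset

/-- Contiguous block demand bound: a block of agents with non-decreasing deficiencies
occupying consecutive positions `p, p+1, …, p+(k−1)` (all within `[1,n]`) contributes
total demand at most `1`, where the agent at position `p+t` contributes `1/dₜ` if her
position exceeds `n − dₜ` (and `dₜ ≠ 0`) and `0` otherwise. -/
theorem block_demand_le_one (n k p : ℕ) (d : Fin k → ℕ)
    (hmono : Monotone d) (hle : ∀ t, d t ≤ n)
    (hp : 1 ≤ p) (hpos : p + k - 1 ≤ n) :
    ∑ t : Fin k,
        (if d t ≠ 0 ∧ n - d t < p + (t : ℕ) then (1 : ℝ) / (d t : ℝ) else 0) ≤ 1 := by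
  classical
  rw [← Finset.sum_filter]
  set S : Finset (Fin k) :=
    univ.filter (fun t => d t ≠ 0 ∧ n - d t < p + (t : ℕ)) with hS
  by_cases hSe : S.Nonempty
  · obtain ⟨m, hmS, hmin⟩ := S.exists_min_image (fun t => (t : ℕ)) hSe
    have hm := (Finset.mem_filter.mp hmS).2
    have hdm : d m ≠ 0 := hm.1
    have hdmpos : (0 : ℝ) < (d m : ℝ) := by
      exact_mod_cast Nat.pos_of_ne_zero hdm
    have hnlt : n < p + (m : ℕ) + d m := by
      have := hm.2
      omega
    have hcard : S.card ≤ d m := by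
      have h1 : S.card ≤ (Finset.Ico (m : ℕ) k).card := by
        refine Finset.card_le_card_of_injOn (fun t : Fin k => (t : ℕ)) ?_ ?_
        · intro t ht
          simp only [Finset.mem_coe, Finset.mem_Ico]
          exact ⟨hmin t ht, t.isLt⟩
        · intro a _ b _ hab
          exact Fin.ext hab
      have h2 : (Finset.Ico (m : ℕ) k).card = k - m := Nat.card_Ico _ _
      have h3 : k - (m : ℕ) ≤ d m := by omega
      omega
    calc ∑ t ∈ S, (1 : ℝ) / (d t : ℝ)
        ≤ ∑ _t ∈ S, (1 : ℝ) / (d m : ℝ) := by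
          apply Finset.sum_le_sum
          intro t ht
          have htm : (m : ℕ) ≤ (t : ℕ) := hmin t ht
          have hdle : d m ≤ d t := hmono (by exact htm)
          have hdt : d t ≠ 0 := ((Finset.mem_filter.mp ht).2).1
          apply one_div_le_one_div_of_le hdmpos
          exact_mod_cast hdle
      _ = S.card * ((1 : ℝ) / (d m : ℝ)) := by
          rw [Finset.sum_const, nsmul_eq_mul]
      _ ≤ (d m : ℝ) * ((1 : ℝ) / (d m : ℝ)) := by
          apply mul_le_mul_of_nonneg_right
          · exact_mod_cast hcard
          · positivity
      _ = 1 := by field_simp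
  · rw [Finset.not_nonempty_iff_eq_empty] at hSe
    rw [hSe]
    simp
end

section
/- Harmonic weight bound: for any deficiencies d_1,…,d_n ∈ {0,…,n} and any ordering π of the n agents, the total weight w(π) = Σ_i w_i(π) is at most the n-th harmonic number H_n = Σ_{k=1}^n 1/k, where w_i(π) = 1/d_i if π(i) > n − d_i and 0 otherwise. -/
open Finset

/-- Harmonic weight bound: for any deficiencies `dᵢ ∈ {0,…,n}` and any ordering `π`
(where `π i` is the 0-indexed position of agent `i`), the total weight is at most the
`n`-th harmonic number `H_n = Σ_{k=1}^n 1/k`. -/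
theorem weight_le_harmonic (n : ℕ) (d : Fin n → ℕ) (hle : ∀ i, d i ≤ n)
    (π : Equiv.Perm (Fin n)) :
    ∑ i : Fin n,
        (if d i ≠ 0 ∧ n - d i < (π i : ℕ) + 1 then (1 : ℝ) / (d i : ℝ) else 0)
      ≤ ∑ k ∈ Finset.range n, (1 : ℝ) / ((k : ℝ) + 1) := by
  have key : ∀ i : Fin n,
      (if d i ≠ 0 ∧ n - d i < (π i : ℕ) + 1 then (1 : ℝ) / (d i : ℝ) else 0)
        ≤ (1 : ℝ) / ((n - (π i : ℕ) : ℕ) : ℝ) := by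
    intro i
    have hlt : (π i : ℕ) < n := (π i).isLt
    have hpos : (0 : ℝ) < ((n - (π i : ℕ) : ℕ) : ℝ) := by
      have : 0 < n - (π i : ℕ) := by omega
      exact_mod_cast this
    split_ifs with h
    · obtain ⟨h0, h2⟩ := h
      apply one_div_le_one_div_of_le hpos
      have : n - (π i : ℕ) ≤ d i := by omega
      exact_mod_cast this
    · positivity
  calc ∑ i : Fin n,
        (if d i ≠ 0 ∧ n - d i < (π i : ℕ) + 1 then (1 : ℝ) / (d i : ℝ) else 0)
      ≤ ∑ i : Fin n, (1 : ℝ) / ((n - (π i : ℕ) : ℕ) : ℝ) :=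
        Finset.sum_le_sum fun i _ => key i
    _ = ∑ k : Fin n, (1 : ℝ) / ((n - (k : ℕ) : ℕ) : ℝ) :=
        Equiv.sum_comp π (fun k : Fin n => (1 : ℝ) / ((n - (k : ℕ) : ℕ) : ℝ))
    _ = ∑ k ∈ Finset.range n, (1 : ℝ) / ((n - k : ℕ) : ℝ) := by
        exact Fin.sum_univ_eq_sum_range (fun k => (1 : ℝ) / ((n - k : ℕ) : ℝ)) n
    _ = ∑ k ∈ Finset.range n, (1 : ℝ) / ((k : ℝ) + 1) := by
        rw [← Finset.sum_range_reflect]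
        apply Finset.sum_congr rfl
        intro k hk
        have hk' : k < n := Finset.mem_range.mp hk
        have : n - (n - 1 - k) = k + 1 := by omega
        rw [this]
        push_cast
        ring
end

section
/- Impossibility for uniform-like mechanisms: consider n ≥ 2 agents and m ≥ 2n − 1 goods. Suppose there is an agent i, a set X of n − 1 goods, and a (deterministic or randomized) allocation rule such that on the following instance there is positive probability that agent i receives no good from X: agent i values each good in X at 1, each of n designated goods in a set Y disjoint from X at 1/n, and all other goods at 0; every other agent values each good in Y at 1 and everything else at 0. Then in some realized allocation with positive probability, some agent receives value at most 1/n times her MMS. -/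
open Finset

/-- The maximin share `MMS_n(v, M)`: the best (sup) over partitions of `M` into `n`
bundles of the minimum bundle value. -/
noncomputable def MMS {α : Type*} [DecidableEq α] (v : α → ℝ) (n : ℕ) (M : Finset α) : ℝ :=
  sSup { t : ℝ | ∃ A : Fin n → Finset α,
    (∀ i j, i ≠ j → Disjoint (A i) (A j)) ∧
    (Finset.univ.biUnion A = M) ∧ t = ⨅ i, ∑ x ∈ A i, v x }

lemma mms_bddAbove {α : Type*} [DecidableEq α] [Fintype α] (v : α → ℝ) (hv : ∀ x, 0 ≤ v x)
    (n : ℕ) (hn : 0 < n) :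
    BddAbove { t : ℝ | ∃ A : Fin n → Finset α,
      (∀ i j, i ≠ j → Disjoint (A i) (A j)) ∧
      (Finset.univ.biUnion A = (Finset.univ : Finset α)) ∧ t = ⨅ i, ∑ x ∈ A i, v x } := by
  refine ⟨∑ x, v x, ?_⟩
  rintro t ⟨A, hdisj, hcover, rfl⟩
  have : Nonempty (Fin n) := ⟨⟨0, hn⟩⟩
  refine le_trans (ciInf_le (Set.Finite.bddBelow (Set.finite_range _)) ⟨0, hn⟩) ?_
  exact Finset.sum_le_sum_of_subset_of_nonneg (Finset.subset_univ _) (fun x _ _ => hv x)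

lemma mms_nonneg {α : Type*} [DecidableEq α] [Fintype α] (v : α → ℝ) (hv : ∀ x, 0 ≤ v x)
    (n : ℕ) (hn : 2 ≤ n) : 0 ≤ MMS v n (Finset.univ : Finset α) := by
  have hn0 : 0 < n := by omega
  have : Nonempty (Fin n) := ⟨⟨0, hn0⟩⟩
  apply le_csSup (mms_bddAbove v hv n hn0)
  refine ⟨fun i => if i = ⟨0, hn0⟩ then Finset.univ else ∅, ?_, ?_, ?_⟩
  · intro i j hij
    dsimp only
    split_ifs with h1 h2 <;> simp_all
  · apply Finset.Subset.antisymm (by simp)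
    intro x _
    exact Finset.mem_biUnion.mpr ⟨⟨0, hn0⟩, Finset.mem_univ _, by simp⟩
  · refine le_antisymm (le_ciInf fun i => ?_) ?_
    · dsimp only
      split_ifs
      · exact Finset.sum_nonneg fun x _ => hv x
      · simp
    · refine le_trans (ciInf_le (Set.Finite.bddBelow (Set.finite_range _)) ⟨1, by omega⟩) ?_
      dsimp only
      rw [if_neg (by simp [Fin.ext_iff])]
      simp

/-- Impossibility for uniform-like mechanisms: with `n ≥ 2` agents and `m ≥ 2n−1`
goods, if on the hard instance (agent `i₀` values each good of `X` at `1`, each good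
of `Y` at `1/n`, the rest at `0`; each other agent values each good of `Y` at `1` and
the rest at `0`) the randomized allocation rule gives agent `i₀` no good of `X` with
positive probability, then with positive probability some agent receives value at
most `1/n` times her MMS. -/
theorem uniform_impossibility (n m : ℕ) (hn : 2 ≤ n) (hm : 2 * n - 1 ≤ m) (i₀ : Fin n)
    (X Y : Finset (Fin m)) (hX : X.card = n - 1) (hY : Y.card = n) (hXY : Disjoint X Y)
    (v : Fin n → Fin m → ℝ)
    (hvi : ∀ x, v i₀ x = if x ∈ X then 1 else if x ∈ Y then 1 / (n : ℝ) else 0)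
    (hvj : ∀ j, j ≠ i₀ → ∀ x, v j x = if x ∈ Y then 1 else 0)
    (p : (Fin m → Fin n) → ℝ) (hp0 : ∀ A, 0 ≤ p A) (hp1 : ∑ A, p A = 1)
    (hpos : ∃ A, 0 < p A ∧ ∀ x ∈ X, A x ≠ i₀) :
    ∃ A, 0 < p A ∧ ∃ j : Fin n,
      ∑ x ∈ Finset.univ.filter (fun x => A x = j), v j x ≤
        (1 / (n : ℝ)) * MMS (v j) n Finset.univ := by
  have hn0 : 0 < n := by omega
  have hnR : (0:ℝ) < n := by exact_mod_cast hn0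
  have hNE : Nonempty (Fin n) := ⟨⟨0, hn0⟩⟩
  -- nonnegativity of all valuations
  have hvnn : ∀ j x, 0 ≤ v j x := by
    intro j x
    by_cases hj : j = i₀
    · subst hj; rw [hvi]; split_ifs <;> positivity
    · rw [hvj j hj]; split_ifs <;> norm_num
  -- MMS of agent i₀ is at least 1
  have hMMSi : 1 ≤ MMS (v i₀) n Finset.univ := by
    apply le_csSup (mms_bddAbove _ (hvnn i₀) n hn0)
    set e := X.orderIsoOfFin hX with he
    refine ⟨fun i => if h : (i : ℕ) < n - 1 then {(e ⟨i, h⟩ : Fin m)} else Finset.univ \ X,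
      ?_, ?_, ?_⟩
    · intro i j hij
      dsimp only
      split_ifs with h1 h2 h2
      · rw [Finset.disjoint_singleton]
        intro hcontr
        apply hij
        have h12 : (⟨(i:ℕ), h1⟩ : Fin (n-1)) = ⟨(j:ℕ), h2⟩ :=
          e.injective (Subtype.coe_injective hcontr)
        exact Fin.ext (show (i:ℕ) = (j:ℕ) by simpa using h12)
      · exact Finset.disjoint_singleton_left.mpr (by simp [(e ⟨(i:ℕ), h1⟩).2])
      · exact Finset.disjoint_singleton_right.mpr (by simp [(e ⟨(j:ℕ), h2⟩).2])
      · exact absurd (Fin.ext (by omega : (i:ℕ) = (j:ℕ))) hij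
    · apply Finset.Subset.antisymm (by simp)
      intro x _
      by_cases hx : x ∈ X
      · refine Finset.mem_biUnion.mpr ⟨⟨(e.symm ⟨x, hx⟩ : Fin (n-1)), by omega⟩, Finset.mem_univ _, ?_⟩
        rw [dif_pos (e.symm ⟨x, hx⟩).isLt]
        simp [Fin.eta]
      · refine Finset.mem_biUnion.mpr ⟨⟨n - 1, by omega⟩, Finset.mem_univ _, ?_⟩
        rw [dif_neg (by simp)]
        simp [hx]
    · have hall : ∀ i : Fin n,
          ∑ x ∈ (if h : (i : ℕ) < n - 1 then {(e ⟨i, h⟩ : Fin m)} else Finset.univ \ X), v i₀ x = 1 := by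
        intro i
        split_ifs with h
        · rw [Finset.sum_singleton, hvi, if_pos (e ⟨(i:ℕ), h⟩).2]
        · have hstep : ∀ x ∈ Finset.univ \ X, v i₀ x = if x ∈ Y then 1 / (n:ℝ) else 0 := by
            intro x hxmem
            rw [hvi, if_neg (Finset.mem_sdiff.mp hxmem).2]
          rw [Finset.sum_congr rfl hstep, Finset.sum_ite_mem]
          have : (Finset.univ \ X) ∩ Y = Y := by
            apply Finset.Subset.antisymm Finset.inter_subset_right
            intro y hy
            exact Finset.mem_inter.mpr ⟨Finset.mem_sdiff.mpr ⟨Finset.mem_univ _,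
              fun hc => (Finset.disjoint_left.mp hXY hc) hy⟩, hy⟩
          rw [this, Finset.sum_const, hY, nsmul_eq_mul]
          field_simp
      rw [show (fun i : Fin n => ∑ x ∈ (if h : (i : ℕ) < n - 1 then {(e ⟨i, h⟩ : Fin m)}
        else Finset.univ \ X), v i₀ x) = fun _ => (1:ℝ) from funext hall]
      exact (ciInf_const).symm
  -- the allocation with positive probability
  obtain ⟨A, hpA, hAX⟩ := hpos
  refine ⟨A, hpA, ?_⟩
  by_cases hcase : (Y.filter (fun y => A y = i₀)).card ≤ 1
  · -- agent i₀ gets at most one good of Y and nothing of X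
    refine ⟨i₀, ?_⟩
    have hsum : ∑ x ∈ Finset.univ.filter (fun x => A x = i₀), v i₀ x
        = ((Y.filter (fun y => A y = i₀)).card : ℝ) * (1 / n) := by
      have hstep : ∀ x ∈ Finset.univ.filter (fun x => A x = i₀),
          v i₀ x = if x ∈ Y then 1 / (n:ℝ) else 0 := by
        intro x hx
        rw [hvi, if_neg (fun hc => hAX x hc (Finset.mem_filter.mp hx).2)]
      rw [Finset.sum_congr rfl hstep, Finset.sum_ite_mem]
      have : Finset.univ.filter (fun x => A x = i₀) ∩ Y = Y.filter (fun y => A y = i₀) := by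
        ext x; simp [Finset.mem_filter, and_comm]
      rw [this, Finset.sum_const, nsmul_eq_mul]
    rw [hsum]
    calc ((Y.filter (fun y => A y = i₀)).card : ℝ) * (1 / n)
        ≤ 1 * (1 / n) := by
          apply mul_le_mul_of_nonneg_right _ (by positivity)
          exact_mod_cast hcase
      _ = (1 / (n:ℝ)) * 1 := by ring
      _ ≤ (1 / (n:ℝ)) * MMS (v i₀) n Finset.univ := by
          apply mul_le_mul_of_nonneg_left hMMSi (by positivity)
  · -- agent i₀ gets ≥ 2 goods of Y; some other agent gets none
    push_neg at hcase
    have hfib : ∑ j : Fin n, (Y.filter (fun y => A y = j)).card = n := by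
      have h := Finset.card_eq_sum_card_fiberwise
        (f := A) (t := Finset.univ) (s := Y) (fun y _ => Finset.mem_univ (A y))
      rw [hY] at h
      exact h.symm
    have hj : ∃ j : Fin n, j ≠ i₀ ∧ (Y.filter (fun y => A y = j)) = ∅ := by
      by_contra hc
      push_neg at hc
      have h1 : ∀ j ∈ Finset.univ.erase i₀, 1 ≤ (Y.filter (fun y => A y = j)).card := by
        intro j hjj
        have hne := hc j (Finset.mem_erase.mp hjj).1
        exact Finset.card_pos.mpr hne
      have h2 : ∑ j ∈ Finset.univ.erase i₀, (Y.filter (fun y => A y = j)).card ≥ n - 1 := by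
        calc ∑ j ∈ Finset.univ.erase i₀, (Y.filter (fun y => A y = j)).card
            ≥ ∑ _j ∈ Finset.univ.erase i₀, 1 := Finset.sum_le_sum h1
          _ = n - 1 := by
              rw [Finset.sum_const, smul_eq_mul, mul_one, Finset.card_erase_of_mem (Finset.mem_univ _),
                Finset.card_univ, Fintype.card_fin]
      have h3 : ∑ j : Fin n, (Y.filter (fun y => A y = j)).card
          = (Y.filter (fun y => A y = i₀)).card
            + ∑ j ∈ Finset.univ.erase i₀, (Y.filter (fun y => A y = j)).card :=
        (Finset.add_sum_erase _ _ (Finset.mem_univ i₀)).symm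
      omega
    obtain ⟨j, hji, hjY⟩ := hj
    refine ⟨j, ?_⟩
    have hsum0 : ∑ x ∈ Finset.univ.filter (fun x => A x = j), v j x = 0 := by
      have hstep : ∀ x ∈ Finset.univ.filter (fun x => A x = j), v j x = 0 := by
        intro x hx
        rw [hvj j hji, if_neg]
        intro hxY
        have : x ∈ Y.filter (fun y => A y = j) :=
          Finset.mem_filter.mpr ⟨hxY, (Finset.mem_filter.mp hx).2⟩
        simp [hjY] at this
      exact Finset.sum_eq_zero hstep
    rw [hsum0]
    have := mms_nonneg (v j) (hvnn j) n hn
    positivity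
end

section
/- Two-agent hard-case partition: let v_1, v_2 be additive valuations over a finite set M of goods with a common favorite good y (y maximizes both v_1 and v_2 over singletons). Suppose v_1(y) ≥ (2/3)·TPS_2(v_1, M) and v_2(y) ≤ (2/3)·TPS_2(v_2, M). Then there exists a partition of M into two bundles S and T such that v_i(S) ≥ (2/3)·TPS_2(v_i, M) and v_i(T) ≥ (2/3)·TPS_2(v_i, M) for both i ∈ {1,2}. -/
open Finset

variable {α : Type*} [DecidableEq α]

set_option linter.unusedSectionVars false
set_option linter.unusedVariables false
set_option maxHeartbeats 1000000

lemma bestGood_spec [Nonempty α] (v : α → ℝ) {S : Finset α} (h : S.Nonempty) :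
    bestGood v S ∈ S ∧ ∀ x ∈ S, v x ≤ v (bestGood v S) := by
  rw [bestGood, dif_pos h]
  exact ⟨(S.exists_max_image v h).choose_spec.1,
    fun x hx => (S.exists_max_image v h).choose_spec.2 x hx⟩


lemma TPS_two [Nonempty α] (v : α → ℝ) (S : Finset α) :
    TPS v 2 S = min ((∑ x ∈ S, v x) / 2) (∑ x ∈ S.erase (bestGood v S), v x) := by
  show TPS v (0+2) S = _
  rw [TPS]
  norm_num [TPS]

/-- One pick per v₁-top-triple: `P` gets a third of `v₂(N)` while `2·v₁(P)` is
bounded by the complement plus two dominator bounds. -/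
lemma lemL (v₁ v₂ : α → ℝ) (h1 : ∀ x, 0 ≤ v₁ x) (h2 : ∀ x, 0 ≤ v₂ x) :
    ∀ (n : ℕ) (N : Finset α), N.card ≤ n → ∀ A B : ℝ, 0 ≤ A → 0 ≤ B →
      (∀ x ∈ N, v₁ x ≤ A) → (∀ x ∈ N, v₁ x ≤ B) →
      ∃ P ⊆ N, (∑ x ∈ N, v₂ x) ≤ 3 * ∑ x ∈ P, v₂ x ∧
        2 * ∑ x ∈ P, v₁ x ≤ A + B + ∑ x ∈ N \ P, v₁ x := by
  intro n
  induction n with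
  | zero =>
    intro N hN A B hA hB _ _
    have hNe : N = ∅ := Finset.card_eq_zero.mp (Nat.le_zero.mp hN)
    subst hNe
    exact ⟨∅, Finset.Subset.refl _, by simp, by simp; linarith⟩
  | succ n ih =>
    intro N hN A B hA hB hbA hbB
    rcases N.eq_empty_or_nonempty with rfl | hne
    · exact ⟨∅, Finset.Subset.refl _, by simp, by simp; linarith⟩
    by_cases h3 : N.card ≤ 3
    · -- small case: pick the v₂-best element
      obtain ⟨p, hpN, hpmax⟩ := N.exists_max_image v₂ hne
      refine ⟨{p}, Finset.singleton_subset_iff.mpr hpN, ?_, ?_⟩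
      · have hs : ∑ x ∈ N, v₂ x ≤ N.card • v₂ p :=
          Finset.sum_le_card_nsmul N v₂ (v₂ p) (fun x hx => hpmax x hx)
        have hc : (N.card : ℝ) ≤ 3 := by exact_mod_cast h3
        have h0 : 0 ≤ v₂ p := h2 p
        rw [nsmul_eq_mul] at hs
        have : (N.card : ℝ) * v₂ p ≤ 3 * v₂ p := by
          exact mul_le_mul_of_nonneg_right hc h0
        simp only [Finset.sum_singleton]
        linarith
      · have hnn : 0 ≤ ∑ x ∈ N \ {p}, v₁ x := Finset.sum_nonneg (fun x _ => h1 x)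
        have := hbA p hpN
        have := hbB p hpN
        simp only [Finset.sum_singleton]
        linarith
    · -- big case: extract top-3 by v₁
      push_neg at h3
      obtain ⟨g1, hg1N, hg1max⟩ := N.exists_max_image v₁ hne
      set N1 := N.erase g1 with hN1
      have hcard1 : N1.card = N.card - 1 := Finset.card_erase_of_mem hg1N
      have hne1 : N1.Nonempty := Finset.card_pos.mp (by omega)
      obtain ⟨g2, hg2N1, hg2max⟩ := N1.exists_max_image v₁ hne1
      set N2 := N1.erase g2 with hN2
      have hcard2 : N2.card = N1.card - 1 := Finset.card_erase_of_mem hg2N1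
      have hne2 : N2.Nonempty := Finset.card_pos.mp (by omega)
      obtain ⟨g3, hg3N2, hg3max⟩ := N2.exists_max_image v₁ hne2
      set N3 := N2.erase g3 with hN3
      have hcard3 : N3.card = N2.card - 1 := Finset.card_erase_of_mem hg3N2
      have hg2N : g2 ∈ N := Finset.mem_of_mem_erase hg2N1
      have hg3N1 : g3 ∈ N1 := Finset.mem_of_mem_erase hg3N2
      have hg3N : g3 ∈ N := Finset.mem_of_mem_erase hg3N1
      have h21 : v₁ g2 ≤ v₁ g1 := hg1max g2 hg2N
      have h32 : v₁ g3 ≤ v₁ g2 := hg2max g3 hg3N1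
      -- pick the v₂-best among g1,g2,g3
      obtain ⟨p, hpG, hpmax⟩ :=
        Finset.exists_max_image ({g1, g2, g3} : Finset α) v₂ ⟨g1, by simp⟩
      have hpN : p ∈ N := by
        simp only [Finset.mem_insert, Finset.mem_singleton] at hpG
        rcases hpG with rfl | rfl | rfl <;> assumption
      -- apply IH to N3
      have hN3card : N3.card ≤ n := by omega
      have hN3sub2 : N3 ⊆ N2 := Finset.erase_subset _ _
      have hN3sub1 : N3 ⊆ N1 := hN3sub2.trans (Finset.erase_subset _ _)
      have hN3subN : N3 ⊆ N := hN3sub1.trans (Finset.erase_subset _ _)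
      obtain ⟨P', hP'sub, hv2', hv1'⟩ := ih N3 hN3card (v₁ g3) (v₁ g3) (h1 g3) (h1 g3)
        (fun x hx => hg3max x (hN3sub2 hx)) (fun x hx => hg3max x (hN3sub2 hx))
      have hpnotN3 : p ∉ N3 := by
        simp only [Finset.mem_insert, Finset.mem_singleton] at hpG
        rcases hpG with rfl | rfl | rfl
        · exact fun h => Finset.notMem_erase p _ (hN3sub1 h)
        · exact fun h => Finset.notMem_erase p _ (hN3sub2 h)
        · exact Finset.notMem_erase _ _
      have hpnotP' : p ∉ P' := fun h => hpnotN3 (hP'sub h)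
      refine ⟨insert p P', ?_, ?_, ?_⟩
      · exact Finset.insert_subset hpN (hP'sub.trans hN3subN)
      all_goals {
        have hsub3 : insert p P' ⊆ N := Finset.insert_subset hpN (hP'sub.trans hN3subN)
        -- sum decompositions
        have hd1 : ∀ f : α → ℝ, ∑ x ∈ N, f x = f g1 + f g2 + f g3 + ∑ x ∈ N3, f x := by
          intro f
          rw [← Finset.add_sum_erase N f hg1N, ← Finset.add_sum_erase N1 f hg2N1,
            ← Finset.add_sum_erase N2 f hg3N2]
          ring
        have hdi : ∀ f : α → ℝ, ∑ x ∈ insert p P', f x = f p + ∑ x ∈ P', f x :=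
          fun f => Finset.sum_insert hpnotP'
        have hds : ∑ x ∈ N \ insert p P', v₁ x
            = ∑ x ∈ N, v₁ x - (v₁ p + ∑ x ∈ P', v₁ x) := by
          rw [Finset.sum_sdiff_eq_sub hsub3, hdi]
        have hds' : ∑ x ∈ N3 \ P', v₁ x = ∑ x ∈ N3, v₁ x - ∑ x ∈ P', v₁ x :=
          Finset.sum_sdiff_eq_sub hP'sub
        have h1N := hd1 v₁
        have h2N := hd1 v₂
        have hp1 : v₂ g1 ≤ v₂ p := hpmax g1 (by simp)
        have hp2 : v₂ g2 ≤ v₂ p := hpmax g2 (by simp)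
        have hp3 : v₂ g3 ≤ v₂ p := hpmax g3 (by simp)
        have hApB : v₁ p ≤ A := hbA p hpN
        have hBpB : v₁ p ≤ B := hbB p hpN
        have hkey : v₁ p + 2 * v₁ g3 ≤ v₁ g1 + v₁ g2 + v₁ g3 := by
          simp only [Finset.mem_insert, Finset.mem_singleton] at hpG
          rcases hpG with rfl | rfl | rfl <;> linarith
        rw [hds'] at hv1'
        first
        | (rw [hdi, h2N]; linarith)
        | (rw [hdi, hds, h1N]; linarith)
      }

lemma lemL' (v₁ v₂ : α → ℝ) (h1 : ∀ x, 0 ≤ v₁ x) (h2 : ∀ x, 0 ≤ v₂ x)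
    (N : Finset α) (A B : ℝ) (hA : 0 ≤ A) (hB : 0 ≤ B)
    (hbA : ∀ x ∈ N, v₁ x ≤ A) (hbB : ∀ x ∈ N, v₁ x ≤ B) :
    ∃ P ⊆ N, (∑ x ∈ N, v₂ x) ≤ 3 * ∑ x ∈ P, v₂ x ∧
      2 * ∑ x ∈ P, v₁ x ≤ A + B + ∑ x ∈ N \ P, v₁ x :=
  lemL v₁ v₂ h1 h2 N.card N le_rfl A B hA hB hbA hbB

/-- Existence of a good bundle `S₀` containing `y`: worth ≥ v₂(M)/3 to agent 2,
with `v₁(S₀ \ {y}) ≤ (1/3)·v₁(M \ {y})`. -/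
lemma lemA_s14 (v₁ v₂ : α → ℝ) (h1 : ∀ x, 0 ≤ v₁ x) (h2 : ∀ x, 0 ≤ v₂ x)
    (M : Finset α) (y : α) (hy : y ∈ M)
    (hfav₁ : ∀ x ∈ M, v₁ x ≤ v₁ y) (hfav₂ : ∀ x ∈ M, v₂ x ≤ v₂ y) :
    ∃ S₀ ⊆ M, y ∈ S₀ ∧ (∑ x ∈ M, v₂ x) ≤ 3 * ∑ x ∈ S₀, v₂ x ∧
      3 * (∑ x ∈ S₀, v₁ x - v₁ y) ≤ ∑ x ∈ M, v₁ x - v₁ y := by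
  classical
  set N := M.erase y with hN
  have hNsub : N ⊆ M := Finset.erase_subset _ _
  have hMN : ∀ f : α → ℝ, ∑ x ∈ M, f x = f y + ∑ x ∈ N, f x :=
    fun f => (Finset.add_sum_erase M f hy).symm
  by_cases hc : N.card ≤ 1
  · refine ⟨{y}, Finset.singleton_subset_iff.mpr hy, Finset.mem_singleton_self y, ?_, ?_⟩
    · have hs : ∑ x ∈ N, v₂ x ≤ N.card • v₂ y :=
        Finset.sum_le_card_nsmul N v₂ (v₂ y) (fun x hx => hfav₂ x (hNsub hx))
      rw [nsmul_eq_mul] at hs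
      have hc' : (N.card : ℝ) ≤ 1 := by exact_mod_cast hc
      have h0 : 0 ≤ v₂ y := h2 y
      have : (N.card : ℝ) * v₂ y ≤ 1 * v₂ y := mul_le_mul_of_nonneg_right hc' h0
      rw [hMN v₂]
      simp only [Finset.sum_singleton]
      linarith
    · have hnn : 0 ≤ ∑ x ∈ N, v₁ x := Finset.sum_nonneg (fun x _ => h1 x)
      rw [hMN v₁]
      simp only [Finset.sum_singleton]
      linarith
  · push_neg at hc
    have hNne : N.Nonempty := Finset.card_pos.mp (by omega)
    obtain ⟨a, haN, hamax⟩ := N.exists_max_image v₁ hNne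
    set N' := N.erase a with hN'
    have hcard' : N'.card = N.card - 1 := Finset.card_erase_of_mem haN
    have hN'ne : N'.Nonempty := Finset.card_pos.mp (by omega)
    obtain ⟨b, hbN', hbmax⟩ := N'.exists_max_image v₁ hN'ne
    set N'' := N'.erase b with hN''
    have hbN : b ∈ N := Finset.mem_of_mem_erase hbN'
    have hN''sub' : N'' ⊆ N' := Finset.erase_subset _ _
    have hN''subN : N'' ⊆ N := hN''sub'.trans (Finset.erase_subset _ _)
    obtain ⟨P, hPsub, hv2, hv1⟩ := lemL' v₁ v₂ h1 h2 N'' (v₁ a) (v₁ b) (h1 a) (h1 b)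
      (fun x hx => hamax x (hN''subN hx)) (fun x hx => hbmax x (hN''sub' hx))
    have hynotP : y ∉ P := fun h => Finset.notMem_erase y M (hN''subN (hPsub h))
    refine ⟨insert y P, Finset.insert_subset hy ((hPsub.trans hN''subN).trans hNsub),
      Finset.mem_insert_self _ _, ?_, ?_⟩
    · have hdi : ∑ x ∈ insert y P, v₂ x = v₂ y + ∑ x ∈ P, v₂ x := Finset.sum_insert hynotP
      have hd : ∑ x ∈ N, v₂ x = v₂ a + v₂ b + ∑ x ∈ N'', v₂ x := by
        rw [← Finset.add_sum_erase N v₂ haN, ← Finset.add_sum_erase N' v₂ hbN']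
        ring
      have ha2 : v₂ a ≤ v₂ y := hfav₂ a (hNsub haN)
      have hb2 : v₂ b ≤ v₂ y := hfav₂ b (hNsub hbN)
      rw [hMN v₂, hdi]
      linarith
    · have hdi : ∑ x ∈ insert y P, v₁ x = v₁ y + ∑ x ∈ P, v₁ x := Finset.sum_insert hynotP
      have hd : ∑ x ∈ N, v₁ x = v₁ a + v₁ b + ∑ x ∈ N'', v₁ x := by
        rw [← Finset.add_sum_erase N v₁ haN, ← Finset.add_sum_erase N' v₁ hbN']
        ring
      have hds : ∑ x ∈ N'' \ P, v₁ x = ∑ x ∈ N'', v₁ x - ∑ x ∈ P, v₁ x :=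
        Finset.sum_sdiff_eq_sub hPsub
      rw [hds] at hv1
      rw [hMN v₁, hdi]
      linarith

/-- Two-agent hard-case partition: if the agents share a favorite good `y` with
`v₁(y) ≥ (2/3)·TPS₂(v₁)` and `v₂(y) ≤ (2/3)·TPS₂(v₂)`, then `M` can be partitioned
into two bundles each worth at least `(2/3)·TPS₂(vᵢ)` to both agents. -/
theorem two_agent_hard_case [Nonempty α] (v₁ v₂ : α → ℝ) (M : Finset α) (y : α)
    (hy : y ∈ M) (hv₁ : ∀ x, 0 ≤ v₁ x) (hv₂ : ∀ x, 0 ≤ v₂ x)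
    (hfav₁ : ∀ x ∈ M, v₁ x ≤ v₁ y) (hfav₂ : ∀ x ∈ M, v₂ x ≤ v₂ y)
    (hbig : (2 / 3) * TPS v₁ 2 M ≤ v₁ y)
    (hsmall : v₂ y ≤ (2 / 3) * TPS v₂ 2 M) :
    ∃ S ⊆ M,
      (2 / 3) * TPS v₁ 2 M ≤ ∑ x ∈ S, v₁ x ∧
      (2 / 3) * TPS v₁ 2 M ≤ ∑ x ∈ M \ S, v₁ x ∧
      (2 / 3) * TPS v₂ 2 M ≤ ∑ x ∈ S, v₂ x ∧
      (2 / 3) * TPS v₂ 2 M ≤ ∑ x ∈ M \ S, v₂ x := by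
  classical
  have hMne : M.Nonempty := ⟨y, hy⟩
  set P₁ := TPS v₁ 2 M with hP₁
  set P₂ := TPS v₂ 2 M with hP₂
  -- TPS upper bounds
  have hP1le : P₁ ≤ ∑ x ∈ M, v₁ x - v₁ y := by
    have hb := bestGood_spec v₁ hMne
    have h1 : P₁ ≤ ∑ x ∈ M.erase (bestGood v₁ M), v₁ x := by
      rw [hP₁, TPS_two]; exact min_le_right _ _
    have h2 : ∑ x ∈ M.erase (bestGood v₁ M), v₁ x
        = ∑ x ∈ M, v₁ x - v₁ (bestGood v₁ M) := Finset.sum_erase_eq_sub hb.1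
    have h3 : v₁ y ≤ v₁ (bestGood v₁ M) := hb.2 y hy
    linarith
  have hP2half : P₂ ≤ (∑ x ∈ M, v₂ x) / 2 := by
    rw [hP₂, TPS_two]; exact min_le_left _ _
  have hP2nn : 0 ≤ P₂ := by nlinarith [hv₂ y, hsmall]
  -- the good bundle S₀
  obtain ⟨S₀, hS₀M, hyS₀, hS₀v2, hS₀v1⟩ := lemA_s14 v₁ v₂ hv₁ hv₂ M y hy hfav₁ hfav₂
  -- family F
  set F := M.powerset.filter (fun S => y ∈ S ∧ (2/3) * P₂ ≤ ∑ x ∈ S, v₂ x) with hF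
  have hmemF : ∀ S : Finset α,
      S ∈ F ↔ S ⊆ M ∧ y ∈ S ∧ (2/3) * P₂ ≤ ∑ x ∈ S, v₂ x := by
    intro S
    simp [hF, Finset.mem_filter, Finset.mem_powerset, and_assoc]
  have hS₀F : S₀ ∈ F := by
    rw [hmemF]
    refine ⟨hS₀M, hyS₀, ?_⟩
    linarith
  have hFne : F.Nonempty := ⟨S₀, hS₀F⟩
  -- min v₁-value over F
  obtain ⟨S1, hS1F, hS1min⟩ := F.exists_min_image (fun S => ∑ x ∈ S, v₁ x) hFne
  set F' := F.filter (fun S => ∑ x ∈ S, v₁ x ≤ ∑ x ∈ S1, v₁ x) with hF'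
  have hF'ne : F'.Nonempty := ⟨S1, by simp [hF', hS1F]⟩
  obtain ⟨S, hSF', hScard⟩ := F'.exists_min_image (fun S => S.card) hF'ne
  have hSF : S ∈ F := (Finset.mem_filter.mp hSF').1
  have hSv1le : ∑ x ∈ S, v₁ x ≤ ∑ x ∈ S1, v₁ x := by
    have := (Finset.mem_filter.mp hSF').2; simpa using this
  obtain ⟨hSM, hyS, hSv2⟩ := (hmemF S).mp hSF
  -- upper bound on v₂(S)
  have hSv2ub : ∑ x ∈ S, v₂ x ≤ (2/3) * P₂ + v₂ y := by
    by_cases hone : ∀ x ∈ S, x = y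
    · have : S = {y} := Finset.eq_singleton_iff_unique_mem.mpr ⟨hyS, hone⟩
      rw [this, Finset.sum_singleton]
      linarith
    · push_neg at hone
      obtain ⟨x, hxS, hxy⟩ := hone
      have hnotF : ¬ ((2/3) * P₂ ≤ ∑ z ∈ S.erase x, v₂ z) := by
        intro hcon
        have hmem : S.erase x ∈ F := by
          rw [hmemF]
          exact ⟨(Finset.erase_subset _ _).trans hSM,
            Finset.mem_erase.mpr ⟨Ne.symm hxy, hyS⟩, hcon⟩
        have hv1e : ∑ z ∈ S.erase x, v₁ z = ∑ z ∈ S, v₁ z - v₁ x :=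
          Finset.sum_erase_eq_sub hxS
        have hle : ∑ z ∈ S.erase x, v₁ z ≤ ∑ z ∈ S1, v₁ z := by
          have := hv₁ x; linarith
        have hmem' : S.erase x ∈ F' := Finset.mem_filter.mpr ⟨hmem, by simpa using hle⟩
        have := hScard _ hmem'
        have hclt : (S.erase x).card < S.card := Finset.card_erase_lt_of_mem hxS
        omega
      push_neg at hnotF
      have hv2e : ∑ z ∈ S.erase x, v₂ z = ∑ z ∈ S, v₂ z - v₂ x :=
        Finset.sum_erase_eq_sub hxS
      have := hfav₂ x (hSM hxS)
      linarith
  -- assemble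
  refine ⟨S, hSM, ?_, ?_, hSv2, ?_⟩
  · have : v₁ y ≤ ∑ x ∈ S, v₁ x :=
      Finset.single_le_sum (fun x _ => hv₁ x) hyS
    linarith
  · rw [Finset.sum_sdiff_eq_sub hSM]
    have hS1S₀ : ∑ x ∈ S1, v₁ x ≤ ∑ x ∈ S₀, v₁ x := hS1min S₀ hS₀F
    linarith
  · rw [Finset.sum_sdiff_eq_sub hSM]
    linarith
end

section
/- Picking-position value guarantee: let v be an additive valuation over M with goods sorted decreasingly e_1, e_2, …, e_m by v, and suppose an agent picks at position k ≤ n in a picking order among n agents (so at most k−1 goods have been removed before her turn). Then the picked good g satisfies v(g) ≥ v(e_k), and v(M \ {e_1,…,e_{k−1}}) ≥ (n−k+1)·TPS_n(v, M). -/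
open Finset

variable {α : Type*} [DecidableEq α]

lemma le_bestGood [Nonempty α] (v : α → ℝ) {S : Finset α} {a : α} (ha : a ∈ S) :
    v a ≤ v (bestGood v S) := by
  have h : S.Nonempty := ⟨a, ha⟩
  rw [bestGood, dif_pos h]
  exact (S.exists_max_image v h).choose_spec.2 a ha

lemma tps_mono_s18 [Nonempty α] (v : α → ℝ) :
    ∀ (n r : ℕ) (S A : Finset α), r < n → A ⊆ S → A.card = r →
      ((n - r : ℕ) : ℝ) * TPS v n S ≤ ∑ x ∈ S \ A, v x := by
  intro n
  induction n with
  | zero => intro r S A hr; exact absurd hr (Nat.not_lt_zero r)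
  | succ n ih =>
    intro r S A hr hAS hA
    match n with
    | 0 =>
      have hr0 : r = 0 := by omega
      subst hr0
      have : A = ∅ := Finset.card_eq_zero.mp hA
      subst this
      simp [TPS]
    | Nat.succ m =>
      -- n + 1 = m + 2
      rcases Nat.eq_zero_or_pos r with hr0 | hrpos
      · subst hr0
        have : A = ∅ := Finset.card_eq_zero.mp hA
        subst this
        have h1 : TPS v (m + 2) S ≤ (∑ x ∈ S, v x) / ((m + 2 : ℕ) : ℝ) := by
          rw [TPS]; exact min_le_left _ _
        have hpos : (0 : ℝ) < ((m + 2 : ℕ) : ℝ) := by positivity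
        calc ((m + 2 - 0 : ℕ) : ℝ) * TPS v (m + 2) S
            ≤ ((m + 2 : ℕ) : ℝ) * ((∑ x ∈ S, v x) / ((m + 2 : ℕ) : ℝ)) := by
              simpa using mul_le_mul_of_nonneg_left h1 (le_of_lt hpos)
          _ = ∑ x ∈ S, v x := by field_simp
          _ = ∑ x ∈ S \ ∅, v x := by simp
      · -- r ≥ 1, so A is nonempty and S is nonempty
        have hAne : A.Nonempty := Finset.card_pos.mp (by omega)
        have hSne : S.Nonempty := hAne.mono hAS
        set b := bestGood v S with hb
        have hbS : b ∈ S := bestGood_mem v hSne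
        have hT : TPS v (m + 2) S ≤ TPS v (m + 1) (S.erase b) := by
          rw [TPS]; exact min_le_right _ _
        have key : ∀ A' : Finset α, A' ⊆ S → A'.card = r → b ∈ A' →
            ((m + 2 - r : ℕ) : ℝ) * TPS v (m + 2) S ≤ ∑ x ∈ S \ A', v x := by
          intro A' hA'S hA'card hbA'
          have h1 : A'.erase b ⊆ S.erase b := Finset.erase_subset_erase b hA'S
          have h2 : (A'.erase b).card = r - 1 := by
            rw [Finset.card_erase_of_mem hbA', hA'card]
          have h3 : r - 1 < m + 1 := by omega
          have hih := ih (r - 1) (S.erase b) (A'.erase b) h3 h1 h2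
          have hsets : S.erase b \ A'.erase b = S \ A' := by
            ext x
            simp only [Finset.mem_sdiff, Finset.mem_erase]
            constructor
            · rintro ⟨⟨hxb, hxS⟩, hx⟩
              exact ⟨hxS, fun hxA => hx ⟨hxb, hxA⟩⟩
            · rintro ⟨hxS, hxA⟩
              refine ⟨⟨fun h => hxA (h ▸ hbA'), hxS⟩, fun h => hxA h.2⟩
          have hcoef : (m + 2 - r : ℕ) = (m + 1 - (r - 1) : ℕ) := by omega
          calc ((m + 2 - r : ℕ) : ℝ) * TPS v (m + 2) S
              ≤ ((m + 2 - r : ℕ) : ℝ) * TPS v (m + 1) (S.erase b) :=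
                mul_le_mul_of_nonneg_left hT (by positivity)
            _ = ((m + 1 - (r - 1) : ℕ) : ℝ) * TPS v (m + 1) (S.erase b) := by
                rw [hcoef]
            _ ≤ ∑ x ∈ S.erase b \ A'.erase b, v x := hih
            _ = ∑ x ∈ S \ A', v x := by rw [hsets]
        by_cases hbA : b ∈ A
        · exact key A hAS hA hbA
        · obtain ⟨a, haA⟩ := hAne
          have haS : a ∈ S := hAS haA
          have hab : a ≠ b := fun h => hbA (h ▸ haA)
          set A' : Finset α := insert b (A.erase a) with hA'
          have hbnotin : b ∉ A.erase a := fun h => hbA (Finset.mem_of_mem_erase h)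
          have hA'S : A' ⊆ S := by
            rw [hA']
            exact Finset.insert_subset hbS ((Finset.erase_subset a A).trans hAS)
          have hA'card : A'.card = r := by
            rw [hA', Finset.card_insert_of_notMem hbnotin,
              Finset.card_erase_of_mem haA, hA]
            omega
          have hbA' : b ∈ A' := Finset.mem_insert_self b _
          have hkey := key A' hA'S hA'card hbA'
          -- compare sums:  S \ A' = insert a ((S \ A).erase b)
          have hsets : S \ A' = insert a ((S \ A).erase b) := by
            ext x
            simp only [hA', Finset.mem_sdiff, Finset.mem_insert, Finset.mem_erase,
              not_or, not_and]
            constructor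
            · rintro ⟨hxS, hxb, hx2⟩
              by_cases hxa : x = a
              · exact Or.inl hxa
              · exact Or.inr ⟨hxb, hxS, hx2 hxa⟩
            · rintro (rfl | ⟨hxb, hxS, hxA⟩)
              · exact ⟨haS, hab, fun h => absurd rfl h⟩
              · exact ⟨hxS, hxb, fun _ => hxA⟩
          have hbSA : b ∈ S \ A := Finset.mem_sdiff.mpr ⟨hbS, hbA⟩
          have hanotin : a ∉ (S \ A).erase b := by
            intro h
            exact (Finset.mem_sdiff.mp (Finset.mem_of_mem_erase h)).2 haA
          have hsum : ∑ x ∈ S \ A', v x ≤ ∑ x ∈ S \ A, v x := by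
            rw [hsets, Finset.sum_insert hanotin,
              Finset.sum_erase_eq_sub hbSA]
            have := le_bestGood v haS
            linarith
          exact hkey.trans hsum

/-- Picking-position value guarantee: let the goods of `M` be enumerated in
non-increasing value order `e 0, e 1, …, e (|M|−1)`. If an agent picks at position
`k ≤ n` (so at most `k−1` goods were removed before her turn, leaving the remaining
set `R`), and `g` is a most valuable remaining good (the good she picks), then
`v(g) ≥ v(e (k−1))` (her `k`-th favorite), and moreover the goods other than her top
`k−1` favorites are worth at least `(n−k+1)·TPS_n(v, M)`. -/
theorem picking_position_guarantee [Nonempty α] (v : α → ℝ) (M : Finset α)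
    (e : ℕ → α) (he : (Finset.range M.card).image e = M)
    (hsorted : ∀ i j, i ≤ j → j < M.card → v (e j) ≤ v (e i))
    (hv : ∀ a, 0 ≤ v a)
    (n k : ℕ) (hk1 : 1 ≤ k) (hkn : k ≤ n) (hnM : n ≤ M.card)
    (R : Finset α) (hR : R ⊆ M) (hrem : M.card - R.card ≤ k - 1)
    (g : α) (hg : g ∈ R) (hmax : ∀ x ∈ R, v x ≤ v g) :
    v (e (k - 1)) ≤ v g ∧
    ((n - k + 1 : ℕ) : ℝ) * TPS v n M ≤
      ∑ x ∈ M \ ((Finset.range (k - 1)).image e), v x := by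
  have hkM : k ≤ M.card := hkn.trans hnM
  have hinj : Set.InjOn e (Finset.range M.card) := by
    rw [← Finset.card_image_iff, he]
    exact (Finset.card_range M.card).symm
  constructor
  · -- Part 1
    set T : Finset α := (Finset.range k).image e with hT
    have hTM : T ⊆ M := by
      rw [hT, ← he]
      exact Finset.image_subset_image (Finset.range_subset_range.mpr hkM)
    have hTcard : T.card = k := by
      rw [hT, Finset.card_image_of_injOn
        (hinj.mono (by simpa using Finset.range_subset_range.mpr hkM)), Finset.card_range]
    have hsd : (T \ R).card ≤ k - 1 := by
      calc (T \ R).card ≤ (M \ R).card :=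
            Finset.card_le_card (Finset.sdiff_subset_sdiff hTM (le_refl R))
        _ = M.card - R.card := Finset.card_sdiff_of_subset hR
        _ ≤ k - 1 := hrem
    have hinterc : (T ∩ R).card + (T \ R).card = T.card :=
      Finset.card_inter_add_card_sdiff T R
    have hne : (T ∩ R).Nonempty := Finset.card_pos.mp (by omega)
    obtain ⟨x, hx⟩ := hne
    obtain ⟨hxT, hxR⟩ := Finset.mem_inter.mp hx
    obtain ⟨i, hi, rfl⟩ := Finset.mem_image.mp hxT
    have hik : i < k := Finset.mem_range.mp hi
    calc v (e (k - 1)) ≤ v (e i) := hsorted i (k - 1) (by omega) (by omega)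
      _ ≤ v g := hmax _ hxR
  · -- Part 2
    set A : Finset α := (Finset.range (k - 1)).image e with hA
    have hAM : A ⊆ M := by
      rw [hA, ← he]
      exact Finset.image_subset_image (Finset.range_subset_range.mpr (by omega))
    have hAcard : A.card = k - 1 := by
      rw [hA, Finset.card_image_of_injOn
        (hinj.mono (by simpa using Finset.range_subset_range.mpr (show k - 1 ≤ M.card by omega))),
        Finset.card_range]
    have hlt : k - 1 < n := by omega
    have := tps_mono_s18 v n (k - 1) M A hlt hAM hAcard
    have hcoef : (n - (k - 1) : ℕ) = n - k + 1 := by omega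
    rw [hcoef] at this
    exact this
end

section
/- MMS approximation arithmetic for the log-n mechanism: let n ≥ 2, H_n = Σ_{k=1}^n 1/k, and ρ = 1/(H_{n−1} + 2) = 1/(H_n − 1/n + 2). Then for every integer r with 1 ≤ r ≤ n, (1 − (2 − 1/(n − r + 1))·ρ)/H_n ≥ ρ. -/
open Finset

/-- The `k`-th harmonicNum number `H_k = Σ_{j=1}^k 1/j`. -/
noncomputable def harmonicNum (k : ℕ) : ℝ := ∑ j ∈ Finset.range k, 1 / ((j : ℝ) + 1)

lemma harmonicNum_pos {k : ℕ} (hk : 1 ≤ k) : 0 < harmonicNum k := by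
  unfold harmonicNum
  apply Finset.sum_pos
  · intro j _; positivity
  · exact Finset.nonempty_range_iff.mpr (by omega)

lemma harmonicNum_nonneg (k : ℕ) : 0 ≤ harmonicNum k := by
  unfold harmonicNum
  apply Finset.sum_nonneg
  intro j _; positivity

lemma harmonicNum_succ (k : ℕ) :
    harmonicNum (k + 1) = harmonicNum k + 1 / ((k : ℝ) + 1) := by
  unfold harmonicNum
  rw [Finset.sum_range_succ]

/-- The final arithmetic step of the `1/(H_{n−1}+2)`-MMS analysis: with
`ρ = 1/(H_{n−1} + 2)` (which equals `1/(H_n − 1/n + 2)`), for every `1 ≤ r ≤ n`,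
`(1 − (2 − 1/(n−r+1))·ρ)/H_n ≥ ρ`. -/
theorem logn_apx_arith (n : ℕ) (hn : 2 ≤ n) (r : ℕ) (hr1 : 1 ≤ r) (hrn : r ≤ n) :
    (1 / (harmonicNum (n - 1) + 2) = 1 / (harmonicNum n - 1 / (n : ℝ) + 2)) ∧
    (1 / (harmonicNum (n - 1) + 2) : ℝ) ≤
      (1 - (2 - 1 / ((n - r + 1 : ℕ) : ℝ)) * (1 / (harmonicNum (n - 1) + 2))) / harmonicNum n := by
  have hn1 : n - 1 + 1 = n := by omega
  have hsucc : harmonicNum n = harmonicNum (n - 1) + 1 / ((n : ℝ)) := by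
    have := harmonicNum_succ (n - 1)
    rw [hn1] at this
    rw [this]
    congr 1
    push_cast [Nat.cast_sub (by omega : 1 ≤ n)]
    ring
  have heq : harmonicNum (n - 1) = harmonicNum n - 1 / (n : ℝ) := by
    rw [hsucc]; ring
  constructor
  · rw [heq]
  · have hpos : 0 < harmonicNum (n - 1) + 2 := by
      have := harmonicNum_nonneg (n - 1); linarith
    have hHn : 0 < harmonicNum n := harmonicNum_pos (by omega)
    set ρ := 1 / (harmonicNum (n - 1) + 2) with hρ
    have hρpos : 0 < ρ := by positivity
    have hρ1 : ρ * (harmonicNum (n - 1) + 2) = 1 := by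
      rw [hρ]; field_simp
    -- 1/(n-r+1) ≥ 1/n
    have hm : (1 : ℕ) ≤ n - r + 1 := by omega
    have hmn : (n - r + 1 : ℕ) ≤ n := by omega
    have hmpos : (0 : ℝ) < ((n - r + 1 : ℕ) : ℝ) := by positivity
    have hnpos : (0 : ℝ) < (n : ℝ) := by positivity
    have hfrac : 1 / (n : ℝ) ≤ 1 / ((n - r + 1 : ℕ) : ℝ) := by
      apply one_div_le_one_div_of_le hmpos
      exact_mod_cast hmn
    rw [le_div_iff₀ hHn]
    -- goal: ρ * H_n ≤ 1 - (2 - 1/(n-r+1)) * ρ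
    have key : ρ * (harmonicNum n + 2 - 1 / ((n - r + 1 : ℕ) : ℝ)) ≤ 1 := by
      calc ρ * (harmonicNum n + 2 - 1 / ((n - r + 1 : ℕ) : ℝ))
          ≤ ρ * (harmonicNum n + 2 - 1 / (n : ℝ)) := by
            apply mul_le_mul_of_nonneg_left _ hρpos.le
            have : 1 / (n : ℝ) ≤ 1 / ((n - r + 1 : ℕ) : ℝ) :=
              one_div_le_one_div_of_le hmpos (by exact_mod_cast hmn)
            linarith
        _ = ρ * (harmonicNum (n - 1) + 2) := by rw [heq]; ring_nf
        _ = 1 := hρ1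
    linarith [key]
end
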